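/- arXiv:2304.05235 — 5 statements merged into one kernel-verified Lean document; each statement's English description precedes it below -/
import Mathlib

section
/- In a dual weak brace (S, +, ∘), for any element z ∈ S, the condition (a - b + c) ∘ z = a ∘ z - b ∘ z + c ∘ z for all a, b, c ∈ S is equivalent to the condition (a + b) ∘ z = a ∘ z - z + b ∘ z for all a, b ∈ S. -/
/-- A dual weak (left) brace: `(S,+)` and `(S,∘)` are inverse semigroups, `(S,∘)` is
Clifford, with `a ∘ (b + c) = a ∘ b - a + a ∘ c` and `a ∘ a⁻ = -a + a`. -/
structure DualWeakBrace (S : Type*) where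
  add : S → S → S
  mul : S → S → S
  neg : S → S
  inv : S → S
  add_assoc : ∀ a b c, add (add a b) c = add a (add b c)
  mul_assoc : ∀ a b c, mul (mul a b) c = mul a (mul b c)
  add_reg : ∀ a, add (add a (neg a)) a = a
  neg_reg : ∀ a, add (add (neg a) a) (neg a) = neg a
  neg_unique : ∀ a b, add (add a b) a = a → add (add b a) b = b → b = neg a
  mul_reg : ∀ a, mul (mul a (inv a)) a = a
  inv_reg : ∀ a, mul (mul (inv a) a) (inv a) = inv a
  inv_unique : ∀ a b, mul (mul a b) a = a → mul (mul b a) b = b → b = inv a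
  clifford : ∀ a, mul a (inv a) = mul (inv a) a
  dist : ∀ a b c, mul a (add b c) = add (add (mul a b) (neg a)) (mul a c)
  weak : ∀ a, mul a (inv a) = add (neg a) a

/-- The right distributor `D_r(S)`. -/
def DualWeakBrace.Dr {S : Type*} (B : DualWeakBrace S) : Set S :=
  {z | ∀ a b, B.mul (B.add a b) z = B.add (B.add (B.mul a z) (B.neg z)) (B.mul b z)}

/-- `σ_a^z(b) = -a∘z + a∘b∘z`. -/
def DualWeakBrace.sigma {S : Type*} (B : DualWeakBrace S) (z a b : S) : S :=
  B.add (B.neg (B.mul a z)) (B.mul (B.mul a b) z)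

/-- `τ_b^z(a) = (σ_a^z(b))⁻ ∘ a ∘ b`. -/
def DualWeakBrace.tau {S : Type*} (B : DualWeakBrace S) (z b a : S) : S :=
  B.mul (B.mul (B.inv (B.sigma z a b)) a) b

/-- The deformed map `r_z`. -/
def DualWeakBrace.rz {S : Type*} (B : DualWeakBrace S) (z : S) : S × S → S × S :=
  fun p => (B.sigma z p.1 p.2, B.tau z p.2 p.1)

/-- The map `ř_w(a,b) = (a∘b - a∘w + w, (a∘b - a∘w + w)⁻ ∘ a ∘ b)`. -/
def DualWeakBrace.rcheck {S : Type*} (B : DualWeakBrace S) (w : S) : S × S → S × S :=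
  fun p =>
    (B.add (B.add (B.mul p.1 p.2) (B.neg (B.mul p.1 w))) w,
     B.mul (B.mul (B.inv (B.add (B.add (B.mul p.1 p.2) (B.neg (B.mul p.1 w))) w)) p.1) p.2)



structure ISq (S : Type*) where
  op : S → S → S
  iv : S → S
  assoc : ∀ a b c, op (op a b) c = op a (op b c)
  reg : ∀ a, op (op a (iv a)) a = a
  reg' : ∀ a, op (op (iv a) a) (iv a) = iv a
  uniq : ∀ a b, op (op a b) a = a → op (op b a) b = b → b = iv a

namespace ISq
variable {S : Type*} (I : ISq S)

theorem iv_iv (a : S) : I.iv (I.iv a) = a :=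
  (I.uniq (I.iv a) a (I.reg' a) (I.reg a)).symm

theorem idem_iv {e : S} (he : I.op e e = e) : I.iv e = e :=
  (I.uniq e e (by rw [he, he]) (by rw [he, he])).symm

theorem absorb {e : S} (he : I.op e e = e) (x : S) : I.op e (I.op e x) = I.op e x := by
  rw [← I.assoc, he]

theorem reg_r (a : S) : I.op a (I.op (I.iv a) a) = a := by rw [← I.assoc]; exact I.reg a

theorem reg'_r (a : S) : I.op (I.iv a) (I.op a (I.iv a)) = I.iv a := by
  rw [← I.assoc]; exact I.reg' a

theorem idem1 (a : S) : I.op (I.op a (I.iv a)) (I.op a (I.iv a)) = I.op a (I.iv a) := by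
  rw [I.assoc, I.reg'_r]

theorem idem2 (a : S) : I.op (I.op (I.iv a) a) (I.op (I.iv a) a) = I.op (I.iv a) a := by
  rw [I.assoc, I.reg_r]

theorem idem_op {e f : S} (he : I.op e e = e) (hf : I.op f f = f) :
    I.op (I.op e f) (I.op e f) = I.op e f := by
  have key : I.op (I.iv (I.op e f)) (I.op e (I.op f (I.op (I.iv (I.op e f)) e)))
      = I.op (I.iv (I.op e f)) e := by
    have h2 : I.op (I.iv (I.op e f)) (I.op e (I.op f (I.iv (I.op e f)))) = I.iv (I.op e f) := by
      have := I.reg' (I.op e f)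
      simp only [I.assoc] at this ⊢
      exact this
    calc I.op (I.iv (I.op e f)) (I.op e (I.op f (I.op (I.iv (I.op e f)) e)))
        = I.op (I.iv (I.op e f)) (I.op e (I.op (I.op f (I.iv (I.op e f))) e)) := by
          rw [I.assoc f (I.iv (I.op e f)) e]
      _ = I.op (I.iv (I.op e f)) (I.op (I.op e (I.op f (I.iv (I.op e f)))) e) := by
          rw [I.assoc e (I.op f (I.iv (I.op e f))) e]
      _ = I.op (I.op (I.iv (I.op e f)) (I.op e (I.op f (I.iv (I.op e f))))) e := by
          rw [I.assoc (I.iv (I.op e f)) (I.op e (I.op f (I.iv (I.op e f)))) e]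
      _ = I.op (I.iv (I.op e f)) e := by rw [h2]
  have cond1 : I.op (I.op (I.op e f) (I.op f (I.op (I.iv (I.op e f)) e))) (I.op e f)
      = I.op e f := by
    have h := I.reg (I.op e f)
    simp only [I.assoc] at h ⊢
    rw [I.absorb he, I.absorb hf]
    exact h
  have cond2 : I.op (I.op (I.op f (I.op (I.iv (I.op e f)) e)) (I.op e f))
      (I.op f (I.op (I.iv (I.op e f)) e)) = I.op f (I.op (I.iv (I.op e f)) e) := by
    simp only [I.assoc]
    rw [I.absorb he, I.absorb hf, key]
  have hu : I.op f (I.op (I.iv (I.op e f)) e) = I.iv (I.op e f) :=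
    I.uniq (I.op e f) _ cond1 cond2
  have huu : I.op (I.op f (I.op (I.iv (I.op e f)) e)) (I.op f (I.op (I.iv (I.op e f)) e))
      = I.op f (I.op (I.iv (I.op e f)) e) := by
    simp only [I.assoc]
    rw [key]
  have hxx : I.op (I.iv (I.op e f)) (I.iv (I.op e f)) = I.iv (I.op e f) := by
    rw [← hu]; exact huu
  have hef_eq : I.op e f = I.iv (I.iv (I.op e f)) :=
    I.uniq (I.iv (I.op e f)) (I.op e f) (I.reg' (I.op e f)) (I.reg (I.op e f))
  rw [hef_eq, I.idem_iv hxx]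
  exact hxx

theorem idem_comm {e f : S} (he : I.op e e = e) (hf : I.op f f = f) :
    I.op e f = I.op f e := by
  have hef := I.idem_op he hf
  have hfe := I.idem_op hf he
  have c1 : I.op (I.op (I.op e f) (I.op f e)) (I.op e f) = I.op e f := by
    simp only [I.assoc] at hef ⊢
    rw [I.absorb hf, I.absorb he]
    exact hef
  have c2 : I.op (I.op (I.op f e) (I.op e f)) (I.op f e) = I.op f e := by
    simp only [I.assoc] at hfe ⊢
    rw [I.absorb he, I.absorb hf]
    exact hfe
  have : I.op f e = I.iv (I.op e f) := I.uniq (I.op e f) (I.op f e) c1 c2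
  rw [this, I.idem_iv hef]

theorem iv_op (I : ISq S) (a b : S) : I.iv (I.op a b) = I.op (I.iv b) (I.iv a) := by
  have hEb := I.idem1 b
  have hFa := I.idem2 a
  have cond1 : I.op (I.op (I.op a b) (I.op (I.iv b) (I.iv a))) (I.op a b) = I.op a b := by
    simp only [I.assoc]
    -- a (b (b⁻ (a⁻ (a b))))
    rw [← I.assoc (I.iv a) a b, ← I.assoc (I.iv b) (I.op (I.iv a) a) b,
      ← I.assoc b (I.op (I.iv b) (I.op (I.iv a) a)) b, ← I.assoc b (I.iv b) (I.op (I.iv a) a),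
      I.idem_comm hEb hFa, I.assoc (I.op (I.iv a) a) (I.op b (I.iv b)) b, I.reg b,
      ← I.assoc a (I.op (I.iv a) a) b, I.reg_r a]
  have cond2 : I.op (I.op (I.op (I.iv b) (I.iv a)) (I.op a b)) (I.op (I.iv b) (I.iv a))
      = I.op (I.iv b) (I.iv a) := by
    simp only [I.assoc]
    -- b⁻ (a⁻ (a (b (b⁻ a⁻))))
    rw [← I.assoc (I.iv a) a (I.op b (I.op (I.iv b) (I.iv a))),
      ← I.assoc b (I.iv b) (I.iv a),
      ← I.assoc (I.op (I.iv a) a) (I.op b (I.iv b)) (I.iv a),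
      I.idem_comm hFa hEb,
      I.assoc (I.op b (I.iv b)) (I.op (I.iv a) a) (I.iv a),
      I.reg' a,
      ← I.assoc (I.iv b) (I.op b (I.iv b)) (I.iv a),
      I.reg'_r b]
  exact (I.uniq (I.op a b) (I.op (I.iv b) (I.iv a)) cond1 cond2).symm

theorem central (I : ISq S) (hc : ∀ x, I.op x (I.iv x) = I.op (I.iv x) x) {e : S}
    (he : I.op e e = e) (a : S) : I.op a e = I.op e a := by
  have hFa := I.idem2 a
  have hive : I.iv e = e := I.idem_iv he
  have K : I.op (I.op a e) (I.iv a) = I.op e (I.op (I.iv a) a) := by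
    have h := hc (I.op a e)
    rw [I.iv_op a e, hive] at h
    calc I.op (I.op a e) (I.iv a)
        = I.op a (I.op e (I.iv a)) := I.assoc a e (I.iv a)
      _ = I.op a (I.op e (I.op e (I.iv a))) := by rw [I.absorb he]
      _ = I.op (I.op a e) (I.op e (I.iv a)) := (I.assoc a e (I.op e (I.iv a))).symm
      _ = I.op (I.op e (I.iv a)) (I.op a e) := h
      _ = I.op e (I.op (I.iv a) (I.op a e)) := I.assoc e (I.iv a) (I.op a e)
      _ = I.op e (I.op (I.op (I.iv a) a) e) := by rw [← I.assoc (I.iv a) a e]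
      _ = I.op e (I.op e (I.op (I.iv a) a)) := by rw [I.idem_comm hFa he]
      _ = I.op e (I.op (I.iv a) a) := I.absorb he _
  calc I.op a e
      = I.op (I.op a (I.op (I.iv a) a)) e := by rw [I.reg_r a]
    _ = I.op a (I.op (I.op (I.iv a) a) e) := I.assoc a (I.op (I.iv a) a) e
    _ = I.op a (I.op e (I.op (I.iv a) a)) := by rw [I.idem_comm hFa he]
    _ = I.op (I.op a e) (I.op (I.iv a) a) := (I.assoc a e (I.op (I.iv a) a)).symm
    _ = I.op (I.op (I.op a e) (I.iv a)) a := (I.assoc (I.op a e) (I.iv a) a).symm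
    _ = I.op (I.op e (I.op (I.iv a) a)) a := by rw [K]
    _ = I.op e (I.op (I.op (I.iv a) a) a) := I.assoc e (I.op (I.iv a) a) a
    _ = I.op e (I.op (I.op a (I.iv a)) a) := by rw [← hc a]
    _ = I.op e a := by rw [I.reg a]

end ISq


namespace DualWeakBrace
variable {S : Type*} (B : DualWeakBrace S)

@[reducible] def isA : ISq S := ⟨B.add, B.neg, B.add_assoc, B.add_reg, B.neg_reg, B.neg_unique⟩
@[reducible] def isM : ISq S := ⟨B.mul, B.inv, B.mul_assoc, B.mul_reg, B.inv_reg, B.inv_unique⟩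

theorem neg_neg (a : S) : B.neg (B.neg a) = a := B.isA.iv_iv a

theorem neg_idem {e : S} (he : B.add e e = e) : B.neg e = e := B.isA.idem_iv he

theorem idem_f (a : S) :
    B.add (B.add a (B.neg a)) (B.add a (B.neg a)) = B.add a (B.neg a) := B.isA.idem1 a

theorem idem_e (a : S) :
    B.add (B.add (B.neg a) a) (B.add (B.neg a) a) = B.add (B.neg a) a := B.isA.idem2 a

theorem add_comm_idem {e f : S} (he : B.add e e = e) (hf : B.add f f = f) :
    B.add e f = B.add f e := B.isA.idem_comm he hf

theorem neg_add (x y : S) : B.neg (B.add x y) = B.add (B.neg y) (B.neg x) := B.isA.iv_op x y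

theorem inv_mul (x y : S) : B.inv (B.mul x y) = B.mul (B.inv y) (B.inv x) := B.isM.iv_op x y

theorem mul_comm_idem {e f : S} (he : B.mul e e = e) (hf : B.mul f f = f) :
    B.mul e f = B.mul f e := B.isM.idem_comm he hf

theorem centralM {e : S} (he : B.mul e e = e) (a : S) : B.mul a e = B.mul e a :=
  B.isM.central B.clifford he a

theorem lamL (a b : S) : B.mul a (B.add (B.inv a) b) = B.add (B.neg a) (B.mul a b) := by
  rw [B.dist, B.weak, B.neg_reg]

theorem mul_idem {e : S} (he : B.add e e = e) : B.mul e e = e := by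
  have hne : B.neg e = e := B.neg_idem he
  have hwe : B.mul e (B.inv e) = e := by rw [B.weak, hne, he]
  calc B.mul e e = B.mul (B.mul e (B.inv e)) e := by rw [hwe]
    _ = e := B.mul_reg e

theorem add_idem_of_mul {e : S} (he : B.mul e e = e) : B.add e e = e := by
  have hie : B.inv e = e := B.isM.idem_iv he
  have hna : B.add (B.neg e) e = e := by rw [← B.weak e, hie, he]
  calc B.add e e = B.add e (B.add (B.neg e) e) := by rw [hna]
    _ = B.add (B.add e (B.neg e)) e := (B.add_assoc e (B.neg e) e).symm
    _ = e := B.add_reg e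

theorem inv_idem {e : S} (he : B.add e e = e) : B.inv e = e := B.isM.idem_iv (B.mul_idem he)

theorem lam_hom (a u v : S) :
    B.add (B.neg a) (B.mul a (B.add u v))
      = B.add (B.add (B.neg a) (B.mul a u)) (B.add (B.neg a) (B.mul a v)) := by
  rw [B.dist]; simp only [B.add_assoc]

theorem lam_neg (a b : S) :
    B.add (B.neg a) (B.mul a (B.neg b)) = B.neg (B.add (B.neg a) (B.mul a b)) := by
  have h1 : B.add (B.add (B.add (B.neg a) (B.mul a b)) (B.add (B.neg a) (B.mul a (B.neg b))))
      (B.add (B.neg a) (B.mul a b)) = B.add (B.neg a) (B.mul a b) := by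
    rw [← B.lam_hom a b (B.neg b), ← B.lam_hom a (B.add b (B.neg b)) b, B.add_reg b]
  have h2 : B.add (B.add (B.add (B.neg a) (B.mul a (B.neg b))) (B.add (B.neg a) (B.mul a b)))
      (B.add (B.neg a) (B.mul a (B.neg b))) = B.add (B.neg a) (B.mul a (B.neg b)) := by
    rw [← B.lam_hom a (B.neg b) b, ← B.lam_hom a (B.add (B.neg b) b) (B.neg b), B.neg_reg b]
  exact B.neg_unique _ _ h1 h2

theorem fR (a b : S) : B.mul a (B.add b (B.neg b))
    = B.add (B.add (B.mul a b) (B.neg (B.mul a b))) a := by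
  rw [B.dist, B.add_assoc, B.lam_neg, B.neg_add, B.neg_neg, ← B.add_assoc]

theorem habs (a b : S) : B.add (B.add a (B.neg a)) (B.mul a b) = B.mul a b := by
  have hfab := B.idem_f (B.mul a b)
  have hfa := B.idem_f a
  have step1 : B.mul a b = B.add (B.add (B.mul a b) (B.neg (B.mul a b)))
      (B.add (B.add a (B.neg a)) (B.mul a b)) := by
    conv_lhs => rw [show b = B.add (B.add b (B.neg b)) b from (B.add_reg b).symm]
    rw [B.dist, B.fR a b]
    simp only [B.add_assoc]
  calc B.add (B.add a (B.neg a)) (B.mul a b)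
      = B.add (B.add a (B.neg a)) (B.add (B.add (B.mul a b) (B.neg (B.mul a b)))
          (B.add (B.add a (B.neg a)) (B.mul a b))) := by rw [← step1]
    _ = B.add (B.add (B.add a (B.neg a)) (B.add (B.mul a b) (B.neg (B.mul a b))))
          (B.add (B.add a (B.neg a)) (B.mul a b)) := (B.add_assoc _ _ _).symm
    _ = B.add (B.add (B.add (B.mul a b) (B.neg (B.mul a b))) (B.add a (B.neg a)))
          (B.add (B.add a (B.neg a)) (B.mul a b)) := by rw [B.add_comm_idem hfa hfab]
    _ = B.add (B.add (B.mul a b) (B.neg (B.mul a b)))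
          (B.add (B.add a (B.neg a)) (B.add (B.add a (B.neg a)) (B.mul a b))) :=
        B.add_assoc _ _ _
    _ = B.add (B.add (B.mul a b) (B.neg (B.mul a b)))
          (B.add (B.add (B.add a (B.neg a)) (B.add a (B.neg a))) (B.mul a b)) := by
        rw [B.add_assoc (B.add a (B.neg a)) (B.add a (B.neg a)) (B.mul a b)]
    _ = B.add (B.add (B.mul a b) (B.neg (B.mul a b)))
          (B.add (B.add a (B.neg a)) (B.mul a b)) := by rw [hfa]
    _ = B.mul a b := step1.symm

theorem add_neg_comm (a : S) : B.add a (B.neg a) = B.add (B.neg a) a := by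
  have h1 : B.add (B.add (B.neg a) a) (B.add a (B.neg a)) = B.add a (B.neg a) := by
    have h := B.habs (B.neg a) (B.inv (B.neg a))
    rw [B.neg_neg, B.weak (B.neg a), B.neg_neg] at h
    exact h
  have h2 : B.add (B.add a (B.neg a)) (B.add (B.neg a) a) = B.add (B.neg a) a := by
    have h := B.habs a (B.inv a)
    rw [B.weak a] at h
    exact h
  calc B.add a (B.neg a) = B.add (B.add (B.neg a) a) (B.add a (B.neg a)) := h1.symm
    _ = B.add (B.add a (B.neg a)) (B.add (B.neg a) a) :=
        B.add_comm_idem (B.idem_e a) (B.idem_f a)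
    _ = B.add (B.neg a) a := h2

theorem centralA {e : S} (he : B.add e e = e) (x : S) : B.add x e = B.add e x :=
  B.isA.central (fun a => B.add_neg_comm a) he x

theorem idemE_add (x : S) : B.add (B.add (B.neg x) x) x = x := by
  rw [← B.add_neg_comm]; exact B.add_reg x

theorem absorb_into {w x : S}
    (hw : B.add w (B.add (B.neg x) x) = B.add (B.neg x) x) : B.add w x = x := by
  calc B.add w x = B.add w (B.add (B.add (B.neg x) x) x) := by rw [B.idemE_add]
    _ = B.add (B.add w (B.add (B.neg x) x)) x := (B.add_assoc _ _ _).symm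
    _ = B.add (B.add (B.neg x) x) x := by rw [hw]
    _ = x := B.idemE_add x

theorem idem_mul_idem {e g : S} (he : B.add e e = e) (hg : B.add g g = g) :
    B.mul e g = B.add e g := by
  have hme := B.mul_idem he
  have hmg := B.mul_idem hg
  have hpm : B.mul (B.mul e g) (B.mul e g) = B.mul e g := B.isM.idem_op hme hmg
  have hp : B.add (B.mul e g) (B.mul e g) = B.mul e g := B.add_idem_of_mul hpm
  have hcomm_eg : B.add e g = B.add g e := B.add_comm_idem he hg
  have hq : B.add (B.add e g) (B.add e g) = B.add e g := by
    calc B.add (B.add e g) (B.add e g)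
        = B.add e (B.add g (B.add e g)) := B.add_assoc _ _ _
      _ = B.add e (B.add (B.add g e) g) := by rw [← B.add_assoc g e g]
      _ = B.add e (B.add (B.add e g) g) := by rw [← hcomm_eg]
      _ = B.add e (B.add e (B.add g g)) := by rw [B.add_assoc e g g]
      _ = B.add e (B.add e g) := by rw [hg]
      _ = B.add (B.add e e) g := by rw [← B.add_assoc]
      _ = B.add e g := by rw [he]
  have hep : B.add e (B.mul e g) = B.mul e g := by
    have h := B.habs e g; rw [B.neg_idem he, he] at h; exact h
  have hgp : B.add g (B.mul e g) = B.mul e g := by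
    have h := B.habs g e; rw [B.neg_idem hg, hg, B.mul_comm_idem hmg hme] at h; exact h
  have hpe : B.add (B.mul e g) e = B.mul e g := by rw [B.centralA he]; exact hep
  have hpg : B.add (B.mul e g) g = B.mul e g := by rw [B.centralA hg]; exact hgp
  have hqe : B.mul (B.add e g) e = B.mul e g := by
    rw [B.centralM hme]
    have hl := B.lamL e g
    rw [B.inv_idem he, B.neg_idem he] at hl
    rw [hl, hep]
  have hqg : B.mul (B.add e g) g = B.mul e g := by
    rw [B.centralM hmg, hcomm_eg]
    have hl := B.lamL g e
    rw [B.inv_idem hg, B.neg_idem hg] at hl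
    rw [hl, B.mul_comm_idem hmg hme, hgp]
  have hmq : B.mul (B.add e g) (B.add e g) = B.add e g := B.mul_idem hq
  have hnq : B.neg (B.add e g) = B.add e g := B.neg_idem hq
  have main : B.add e g = B.mul e g := by
    conv_lhs => rw [← hmq]
    rw [B.dist, hqe, hqg, hnq]
    have hpq : B.add (B.mul e g) (B.add e g) = B.mul e g := by
      rw [← B.add_assoc, hpe, hpg]
    rw [hpq, hp]
  exact main.symm

theorem idem_mul {e : S} (he : B.add e e = e) (b : S) : B.mul e b = B.add e b := by
  have step1 : B.add e (B.mul e b) = B.mul e b := by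
    have h := B.habs e b; rw [B.neg_idem he, he] at h; exact h
  have step2 : B.mul e (B.add e b) = B.add e (B.mul e b) := by
    have hl := B.lamL e b; rw [B.inv_idem he, B.neg_idem he] at hl; exact hl
  have hEq_idem : B.add (B.add (B.neg (B.add e b)) (B.add e b))
      (B.add (B.neg (B.add e b)) (B.add e b)) = B.add (B.neg (B.add e b)) (B.add e b) :=
    B.idem_e (B.add e b)
  have hE : B.mul (B.add (B.neg (B.add e b)) (B.add e b)) (B.add e b) = B.add e b := by
    rw [← B.weak (B.add e b)]; exact B.mul_reg (B.add e b)
  have hEe : B.add e (B.add (B.neg (B.add e b)) (B.add e b))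
      = B.add (B.neg (B.add e b)) (B.add e b) := by
    rw [B.neg_add e b, B.neg_idem he]
    have red : B.add (B.add (B.neg b) e) (B.add e b) = B.add (B.neg b) (B.add e b) := by
      rw [B.add_assoc (B.neg b) e (B.add e b), ← B.add_assoc e e b, he]
    rw [red, ← B.add_assoc e (B.neg b) (B.add e b), ← B.centralA he (B.neg b),
      B.add_assoc (B.neg b) e (B.add e b), ← B.add_assoc e e b, he]
  have step3 : B.mul e (B.add e b) = B.add e b := by
    conv_lhs => rw [← hE]
    rw [← B.mul_assoc, B.idem_mul_idem he hEq_idem, hEe, hE]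
  calc B.mul e b = B.add e (B.mul e b) := step1.symm
    _ = B.mul e (B.add e b) := step2.symm
    _ = B.add e b := step3

theorem e_split (b z : S) : B.add (B.neg (B.mul b z)) (B.mul b z)
    = B.add (B.add (B.neg b) b) (B.add (B.neg z) z) := by
  have hezA : B.add (B.mul z (B.inv z)) (B.mul z (B.inv z)) = B.mul z (B.inv z) :=
    B.add_idem_of_mul (B.isM.idem1 z)
  have hebA : B.add (B.mul b (B.inv b)) (B.mul b (B.inv b)) = B.mul b (B.inv b) :=
    B.add_idem_of_mul (B.isM.idem1 b)
  calc B.add (B.neg (B.mul b z)) (B.mul b z)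
      = B.mul (B.mul b z) (B.inv (B.mul b z)) := (B.weak _).symm
    _ = B.mul (B.mul b z) (B.mul (B.inv z) (B.inv b)) := by rw [B.inv_mul]
    _ = B.mul b (B.mul (B.mul z (B.inv z)) (B.inv b)) := by
        rw [B.mul_assoc, ← B.mul_assoc z (B.inv z) (B.inv b)]
    _ = B.mul b (B.mul (B.inv b) (B.mul z (B.inv z))) := by
        rw [← B.centralM (B.isM.idem1 z) (B.inv b)]
    _ = B.mul (B.mul b (B.inv b)) (B.mul z (B.inv z)) := (B.mul_assoc _ _ _).symm
    _ = B.add (B.mul b (B.inv b)) (B.mul z (B.inv z)) := B.idem_mul hebA _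
    _ = B.add (B.add (B.neg b) b) (B.add (B.neg z) z) := by rw [B.weak b, B.weak z]

theorem absorb_fz (b z : S) :
    B.add (B.add z (B.neg z)) (B.mul b z) = B.mul b z := by
  apply B.absorb_into
  rw [B.e_split b z]
  have hfz := B.idem_f z
  have heb := B.idem_e b
  have hez := B.idem_e z
  rw [← B.add_assoc, B.add_comm_idem hfz heb, B.add_assoc, B.add_neg_comm z, hez]

end DualWeakBrace

/-- In a dual weak brace, `(a - b + c)∘z = a∘z - b∘z + c∘z` for all `a,b,c`
is equivalent to `(a + b)∘z = a∘z - z + b∘z` for all `a,b`. -/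
theorem statement0 {S : Type*} (B : DualWeakBrace S) (z : S) :
    (∀ a b c : S, B.mul (B.add (B.add a (B.neg b)) c) z =
        B.add (B.add (B.mul a z) (B.neg (B.mul b z))) (B.mul c z)) ↔
    (∀ a b : S, B.mul (B.add a b) z =
        B.add (B.add (B.mul a z) (B.neg z)) (B.mul b z)) := by
  constructor
  · intro h a b
    have hfb := B.idem_f b
    have hnf : B.neg (B.add b (B.neg b)) = B.add b (B.neg b) := B.neg_idem hfb
    have inst := h a (B.add b (B.neg b)) b
    rw [hnf, B.add_assoc a (B.add b (B.neg b)) b, B.add_reg b,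
      B.idem_mul hfb z, B.neg_add (B.add b (B.neg b)) z, hnf] at inst
    rw [inst, ← B.add_assoc (B.mul a z) (B.neg z) (B.add b (B.neg b)),
      B.add_assoc (B.add (B.mul a z) (B.neg z)) (B.add b (B.neg b)) (B.mul b z),
      B.habs b z]
  · intro h a b c
    have heb := B.idem_e b
    have hX : B.add (B.add (B.neg z) (B.mul (B.neg b) z)) (B.neg z)
        = B.neg (B.mul b z) := by
      apply B.neg_unique
      · -- (b∘z + X) + b∘z = b∘z
        have hY : B.add (B.mul b z) (B.add (B.neg z) (B.mul (B.neg b) z))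
            = B.add (B.add b (B.neg b)) z := by
          rw [← B.add_assoc (B.mul b z) (B.neg z) (B.mul (B.neg b) z), ← h b (B.neg b),
            B.idem_mul (B.idem_f b) z]
        rw [← B.add_assoc (B.mul b z) (B.add (B.neg z) (B.mul (B.neg b) z)) (B.neg z),
          hY, B.add_assoc (B.add b (B.neg b)) z (B.neg z),
          B.add_assoc (B.add b (B.neg b)) (B.add z (B.neg z)) (B.mul b z),
          B.absorb_fz b z, B.habs b z]
      · -- (X + b∘z) + X = X
        have habs2 : B.add (B.add (B.neg b) b) (B.mul (B.neg b) z) = B.mul (B.neg b) z := by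
          have hh := B.habs (B.neg b) z; rw [B.neg_neg] at hh; exact hh
        have hzX : B.add z (B.add (B.add (B.neg z) (B.mul (B.neg b) z)) (B.neg z))
            = B.add (B.mul (B.neg b) z) (B.neg z) := by
          rw [← B.add_assoc z (B.add (B.neg z) (B.mul (B.neg b) z)) (B.neg z),
            ← B.add_assoc z (B.neg z) (B.mul (B.neg b) z), B.absorb_fz (B.neg b) z]
        have hcomb2 : B.add (B.add (B.mul (B.neg b) z) (B.neg z)) (B.mul b z)
            = B.add (B.add (B.neg b) b) z := by
          rw [← h (B.neg b) b, B.idem_mul heb z]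
        have hXb : B.add (B.add (B.add (B.neg z) (B.mul (B.neg b) z)) (B.neg z)) (B.mul b z)
            = B.add (B.neg z) (B.add (B.add (B.neg b) b) z) := by
          rw [B.add_assoc (B.add (B.neg z) (B.mul (B.neg b) z)) (B.neg z) (B.mul b z),
            B.add_assoc (B.neg z) (B.mul (B.neg b) z) (B.add (B.neg z) (B.mul b z)),
            ← B.add_assoc (B.mul (B.neg b) z) (B.neg z) (B.mul b z), hcomb2]
        rw [hXb, B.add_assoc (B.neg z) (B.add (B.add (B.neg b) b) z)
            (B.add (B.add (B.neg z) (B.mul (B.neg b) z)) (B.neg z)),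
          B.add_assoc (B.add (B.neg b) b) z
            (B.add (B.add (B.neg z) (B.mul (B.neg b) z)) (B.neg z)),
          hzX, ← B.add_assoc (B.add (B.neg b) b) (B.mul (B.neg b) z) (B.neg z), habs2,
          ← B.add_assoc (B.neg z) (B.mul (B.neg b) z) (B.neg z)]
    rw [h (B.add a (B.neg b)) c, h a (B.neg b), ← hX]
    simp only [B.add_assoc]
end

section
/- In a dual weak brace (S, +, ∘), the condition (a + b) ∘ z = a ∘ z - z + b ∘ z for all a, b ∈ S is equivalent to (a + b) ∘ z = a ∘ z + (z⁻ + b) ∘ z for all a, b ∈ S. -/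
namespace DWBHelp

section Generic
variable {S : Type*}

theorem iv_invol (op : S → S → S) (iv : S → S)
    (reg : ∀ a, op (op a (iv a)) a = a)
    (ivreg : ∀ a, op (op (iv a) a) (iv a) = iv a)
    (uniq : ∀ a b, op (op a b) a = a → op (op b a) b = b → b = iv a)
    (a : S) : iv (iv a) = a :=
  (uniq (iv a) a (ivreg a) (reg a)).symm

theorem idem_iv (op : S → S → S) (iv : S → S)
    (uniq : ∀ a b, op (op a b) a = a → op (op b a) b = b → b = iv a)
    (e : S) (he : op e e = e) : iv e = e :=
  (uniq e e (by rw [he, he]) (by rw [he, he])).symm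

theorem idem_sum (op : S → S → S) (iv : S → S)
    (assoc : ∀ a b c, op (op a b) c = op a (op b c))
    (reg : ∀ a, op (op a (iv a)) a = a)
    (ivreg : ∀ a, op (op (iv a) a) (iv a) = iv a)
    (uniq : ∀ a b, op (op a b) a = a → op (op b a) b = b → b = iv a)
    (e f : S) (he : op e e = e) (hf : op f f = f) :
    op (op e f) (op e f) = op e f := by
  have hA : op (op (op e f) (op f (op (iv (op e f)) e))) (op e f) = op e f := by
    simp only [assoc]
    rw [← assoc f f (op (iv (op e f)) (op e (op e f))), hf]
    rw [← assoc e e f, he]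
    rw [← assoc f (iv (op e f)) (op e f)]
    rw [← assoc e (op f (iv (op e f))) (op e f)]
    rw [← assoc e f (iv (op e f))]
    exact reg (op e f)
  have hB : op (op (op f (op (iv (op e f)) e)) (op e f)) (op f (op (iv (op e f)) e))
      = op f (op (iv (op e f)) e) := by
    simp only [assoc]
    rw [← assoc e e (op f (op f (op (iv (op e f)) e))), he]
    rw [← assoc f f (op (iv (op e f)) e), hf]
    rw [← assoc e f (op (iv (op e f)) e)]
    rw [← assoc (op e f) (iv (op e f)) e]
    rw [← assoc (iv (op e f)) (op (op e f) (iv (op e f))) e]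
    rw [← assoc (iv (op e f)) (op e f) (iv (op e f))]
    rw [ivreg (op e f)]
  have h1 : op f (op (iv (op e f)) e) = iv (op e f) := uniq (op e f) _ hA hB
  have h2 : op (iv (op e f)) (iv (op e f)) = iv (op e f) := by
    conv_lhs => rw [← h1]
    simp only [assoc]
    rw [← assoc e f (op (iv (op e f)) e)]
    rw [← assoc (op e f) (iv (op e f)) e]
    rw [← assoc (iv (op e f)) (op (op e f) (iv (op e f))) e]
    rw [← assoc (iv (op e f)) (op e f) (iv (op e f))]
    rw [ivreg (op e f)]
    exact h1
  have h5 : op e f = iv (op e f) :=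
    (iv_invol op iv reg ivreg uniq (op e f)).symm.trans (idem_iv op iv uniq _ h2)
  rw [h5]; exact h2

theorem idem_comm (op : S → S → S) (iv : S → S)
    (assoc : ∀ a b c, op (op a b) c = op a (op b c))
    (reg : ∀ a, op (op a (iv a)) a = a)
    (ivreg : ∀ a, op (op (iv a) a) (iv a) = iv a)
    (uniq : ∀ a b, op (op a b) a = a → op (op b a) b = b → b = iv a)
    (e f : S) (he : op e e = e) (hf : op f f = f) :
    op e f = op f e := by
  have hs := idem_sum op iv assoc reg ivreg uniq e f he hf
  have hs' := idem_sum op iv assoc reg ivreg uniq f e hf he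
  have hA : op (op (op e f) (op f e)) (op e f) = op e f := by
    simp only [assoc]
    rw [← assoc f f (op e (op e f)), hf]
    rw [← assoc e e f, he]
    rw [← assoc e f (op e f)]
    exact hs
  have hB : op (op (op f e) (op e f)) (op f e) = op f e := by
    simp only [assoc]
    rw [← assoc e e (op f (op f e)), he]
    rw [← assoc f f e, hf]
    rw [← assoc f e (op f e)]
    exact hs'
  exact ((uniq (op e f) (op f e) hA hB).trans (idem_iv op iv uniq _ hs)).symm

end Generic

section Main
variable {S : Type*} (B : DualWeakBrace S)
local infixl:65 " ⊹ " => B.add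
local infixl:70 " ⊚ " => B.mul
local prefix:100 "∿" => B.neg
local postfix:101 "ꜝ" => B.inv

theorem nn (a : S) : ∿(∿a) = a :=
  iv_invol B.add B.neg B.add_reg B.neg_reg B.neg_unique a

theorem nidem (e : S) (he : e ⊹ e = e) : ∿e = e :=
  idem_iv B.add B.neg B.neg_unique e he

theorem acomm (e f : S) (he : e ⊹ e = e) (hf : f ⊹ f = f) : e ⊹ f = f ⊹ e :=
  idem_comm B.add B.neg B.add_assoc B.add_reg B.neg_reg B.neg_unique e f he hf

theorem asum (e f : S) (he : e ⊹ e = e) (hf : f ⊹ f = f) : (e ⊹ f) ⊹ (e ⊹ f) = e ⊹ f :=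
  idem_sum B.add B.neg B.add_assoc B.add_reg B.neg_reg B.neg_unique e f he hf

theorem mcomm (e f : S) (he : e ⊚ e = e) (hf : f ⊚ f = f) : e ⊚ f = f ⊚ e :=
  idem_comm B.mul B.inv B.mul_assoc B.mul_reg B.inv_reg B.inv_unique e f he hf

theorem eidem (a : S) : (a ⊹ ∿a) ⊹ (a ⊹ ∿a) = a ⊹ ∿a := by
  rw [B.add_assoc, ← B.add_assoc (∿a) a (∿a), B.neg_reg]

theorem hidem (a : S) : (∿a ⊹ a) ⊹ (∿a ⊹ a) = ∿a ⊹ a := by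
  rw [B.add_assoc, ← B.add_assoc a (∿a) a, B.add_reg]

theorem negadd (a b : S) : ∿(a ⊹ b) = ∿b ⊹ ∿a := by
  refine (B.neg_unique (a ⊹ b) (∿b ⊹ ∿a) ?_ ?_).symm
  · simp only [B.add_assoc]
    rw [← B.add_assoc (∿a) a b]
    rw [← B.add_assoc b (∿b) ((∿a ⊹ a) ⊹ b)]
    rw [← B.add_assoc (b ⊹ ∿b) (∿a ⊹ a) b]
    rw [acomm B (b ⊹ ∿b) (∿a ⊹ a) (eidem B b) (hidem B a)]
    rw [B.add_assoc (∿a ⊹ a) (b ⊹ ∿b) b]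
    rw [B.add_reg b]
    rw [B.add_assoc (∿a) a b]
    rw [← B.add_assoc a (∿a) (a ⊹ b)]
    rw [← B.add_assoc (a ⊹ ∿a) a b]
    rw [B.add_reg a]
  · simp only [B.add_assoc]
    rw [← B.add_assoc (∿a) a (b ⊹ (∿b ⊹ ∿a))]
    rw [← B.add_assoc b (∿b) (∿a)]
    rw [← B.add_assoc (∿a ⊹ a) (b ⊹ ∿b) (∿a)]
    rw [acomm B (∿a ⊹ a) (b ⊹ ∿b) (hidem B a) (eidem B b)]
    rw [B.add_assoc (b ⊹ ∿b) (∿a ⊹ a) (∿a)]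
    rw [B.neg_reg a]
    rw [← B.add_assoc (∿b) (b ⊹ ∿b) (∿a)]
    rw [← B.add_assoc (∿b) b (∿b)]
    rw [B.neg_reg b]

theorem negmul (a b : S) : ∿(a ⊚ b) = ∿a ⊹ (a ⊚ ∿b ⊹ ∿a) := by
  refine (B.neg_unique (a ⊚ b) (∿a ⊹ (a ⊚ ∿b ⊹ ∿a)) ?_ ?_).symm
  · simp only [B.add_assoc]
    rw [← B.add_assoc (a ⊚ b) (∿a) (a ⊚ ∿b ⊹ (∿a ⊹ a ⊚ b))]
    rw [← B.add_assoc (a ⊚ b ⊹ ∿a) (a ⊚ ∿b) (∿a ⊹ a ⊚ b)]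
    rw [← B.dist a b (∿b)]
    rw [← B.add_assoc (a ⊚ (b ⊹ ∿b)) (∿a) (a ⊚ b)]
    rw [← B.dist a (b ⊹ ∿b) b]
    rw [B.add_reg b]
  · simp only [B.add_assoc]
    rw [← B.add_assoc (a ⊚ ∿b) (∿a) (a ⊚ b ⊹ (∿a ⊹ (a ⊚ ∿b ⊹ ∿a)))]
    rw [← B.add_assoc (a ⊚ ∿b ⊹ ∿a) (a ⊚ b) (∿a ⊹ (a ⊚ ∿b ⊹ ∿a))]
    rw [← B.dist a (∿b) b]
    rw [← B.add_assoc (a ⊚ (∿b ⊹ b)) (∿a) (a ⊚ ∿b ⊹ ∿a)]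
    rw [← B.add_assoc (a ⊚ (∿b ⊹ b) ⊹ ∿a) (a ⊚ ∿b) (∿a)]
    rw [← B.dist a (∿b ⊹ b) (∿b)]
    rw [B.neg_reg b]

theorem emul (a b : S) : (a ⊚ b) ⊹ ∿(a ⊚ b) = a ⊚ (b ⊹ ∿b) ⊹ ∿a := by
  rw [negmul B a b]
  rw [← B.add_assoc (a ⊚ b) (∿a) (a ⊚ ∿b ⊹ ∿a)]
  rw [← B.add_assoc (a ⊚ b ⊹ ∿a) (a ⊚ ∿b) (∿a)]
  rw [← B.dist a b (∿b)]

theorem eabs (a b : S) : (a ⊹ ∿a) ⊹ a ⊚ b = a ⊚ b := by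
  have h1 : ((a ⊚ b) ⊹ ∿(a ⊚ b)) ⊹ (a ⊹ ∿a) = (a ⊚ b) ⊹ ∿(a ⊚ b) := by
    rw [emul B a b]
    rw [B.add_assoc (a ⊚ (b ⊹ ∿b)) (∿a) (a ⊹ ∿a)]
    rw [← B.add_assoc (∿a) a (∿a)]
    rw [B.neg_reg a]
  have h2 : (a ⊹ ∿a) ⊹ ((a ⊚ b) ⊹ ∿(a ⊚ b)) = (a ⊚ b) ⊹ ∿(a ⊚ b) :=
    (acomm B _ _ (eidem B a) (eidem B (a ⊚ b))).trans h1
  calc (a ⊹ ∿a) ⊹ a ⊚ b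
      = (a ⊹ ∿a) ⊹ (((a ⊚ b) ⊹ ∿(a ⊚ b)) ⊹ (a ⊚ b)) := by rw [B.add_reg (a ⊚ b)]
    _ = ((a ⊹ ∿a) ⊹ ((a ⊚ b) ⊹ ∿(a ⊚ b))) ⊹ (a ⊚ b) := (B.add_assoc _ _ _).symm
    _ = ((a ⊚ b) ⊹ ∿(a ⊚ b)) ⊹ (a ⊚ b) := by rw [h2]
    _ = a ⊚ b := B.add_reg (a ⊚ b)

theorem habs (x : S) : (∿x ⊹ x) ⊹ x = x := by
  have h1 := eabs B (x ⊚ xꜝ) x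
  rw [B.mul_reg x] at h1
  rw [B.weak x] at h1
  rw [nidem B (∿x ⊹ x) (hidem B x)] at h1
  rw [hidem B x] at h1
  exact h1

theorem enegabs (x : S) : (x ⊹ ∿x) ⊹ ∿x = ∿x := by
  have h := habs B (∿x)
  rw [nn B x] at h
  exact h

theorem xe (x : S) : x ⊹ (x ⊹ ∿x) = x := by
  have h1 : ∿(x ⊹ (x ⊹ ∿x)) = ∿x := by
    rw [negadd B x (x ⊹ ∿x)]
    rw [nidem B (x ⊹ ∿x) (eidem B x)]
    exact enegabs B x
  have h2 := congrArg B.neg h1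
  rw [nn B (x ⊹ (x ⊹ ∿x)), nn B x] at h2
  exact h2

theorem ehcomm (x : S) : x ⊹ ∿x = ∿x ⊹ x := by
  have g1 : (x ⊹ ∿x) ⊹ (∿x ⊹ x) = ∿x ⊹ x := by
    rw [← B.add_assoc (x ⊹ ∿x) (∿x) x, enegabs B x]
  have g2 : (∿x ⊹ x) ⊹ (x ⊹ ∿x) = x ⊹ ∿x := by
    rw [← B.add_assoc (∿x ⊹ x) x (∿x), habs B x]
  calc x ⊹ ∿x = (∿x ⊹ x) ⊹ (x ⊹ ∿x) := g2.symm
    _ = (x ⊹ ∿x) ⊹ (∿x ⊹ x) := acomm B _ _ (hidem B x) (eidem B x)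
    _ = ∿x ⊹ x := g1

theorem central (e x : S) (he : e ⊹ e = e) : e ⊹ x = x ⊹ e := by
  have ne : ∿e = e := nidem B e he
  have hu := ehcomm B (e ⊹ x)
  rw [negadd B e x, ne] at hu
  have hL : (e ⊹ x) ⊹ (∿x ⊹ e) = e ⊹ (x ⊹ ∿x) := by
    rw [B.add_assoc e x (∿x ⊹ e), ← B.add_assoc x (∿x) e]
    rw [acomm B (x ⊹ ∿x) e (eidem B x) he]
    rw [← B.add_assoc e e (x ⊹ ∿x), he]
  have hR : (∿x ⊹ e) ⊹ (e ⊹ x) = ∿x ⊹ (e ⊹ x) := by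
    rw [B.add_assoc (∿x) e (e ⊹ x), ← B.add_assoc e e x, he]
  rw [hL, hR] at hu
  have h2 := congrArg (B.add x) hu
  have hL2 : x ⊹ (e ⊹ (x ⊹ ∿x)) = x ⊹ e := by
    rw [acomm B e (x ⊹ ∿x) he (eidem B x)]
    rw [← B.add_assoc x (x ⊹ ∿x) e]
    rw [xe B x]
  have hR2 : x ⊹ (∿x ⊹ (e ⊹ x)) = e ⊹ x := by
    rw [← B.add_assoc x (∿x) (e ⊹ x)]
    rw [← B.add_assoc (x ⊹ ∿x) e x]
    rw [acomm B (x ⊹ ∿x) e (eidem B x) he]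
    rw [B.add_assoc e (x ⊹ ∿x) x]
    rw [B.add_reg x]
  rw [hL2, hR2] at h2
  exact h2.symm

theorem maid (e : S) (he : e ⊹ e = e) : e ⊚ e = e := by
  have h1 : e ⊚ eꜝ = e := by rw [B.weak e, nidem B e he, he]
  have h2 := B.mul_reg e
  rw [h1] at h2
  exact h2

theorem tl (p q : S) (hp : p ⊹ p = p) (hq : q ⊹ q = q) : p ⊹ q = p ⊚ q := by
  have np := nidem B p hp
  have nq := nidem B q hq
  have mp := maid B p hp
  have mq := maid B q hq
  have r1 : p ⊹ p ⊚ q = p ⊚ q := by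
    have h := eabs B p q
    rw [np, hp] at h
    exact h
  have mqp : p ⊚ q = q ⊚ p := mcomm B p q mp mq
  have r2 : q ⊹ p ⊚ q = p ⊚ q := by
    have h := eabs B q p
    rw [nq, hq] at h
    rw [mqp]
    exact h
  have wp : p ⊚ q ⊹ p = p ⊚ q := by rw [← central B p (p ⊚ q) hp]; exact r1
  have wq : p ⊚ q ⊹ q = p ⊚ q := by rw [← central B q (p ⊚ q) hq]; exact r2
  have ww : p ⊚ q ⊹ p ⊚ q = p ⊚ q := by
    have hd := B.dist p q q
    rw [hq, np, wp] at hd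
    exact hd.symm
  have hs : (p ⊹ q) ⊹ (p ⊹ q) = p ⊹ q := asum B p q hp hq
  have ms : (p ⊹ q) ⊚ (p ⊹ q) = p ⊹ q := maid B (p ⊹ q) hs
  have ns : ∿(p ⊹ q) = p ⊹ q := nidem B (p ⊹ q) hs
  have c1 : p ⊚ (p ⊹ q) = p ⊚ q := by
    have hd := B.dist p p q
    rw [mp, np, hp] at hd
    rw [r1] at hd
    exact hd
  have c2 : q ⊚ (p ⊹ q) = p ⊚ q := by
    have hd := B.dist q p q
    rw [mq, nq, ← mqp] at hd
    rw [wq, wq] at hd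
    exact hd
  have c3 : p ⊹ q = p ⊚ q ⊹ ((p ⊹ q) ⊹ p ⊚ q) := by
    have hd := B.dist (p ⊹ q) p q
    rw [ms, ns] at hd
    rw [mcomm B (p ⊹ q) p ms mp, c1] at hd
    rw [mcomm B (p ⊹ q) q ms mq, c2] at hd
    rw [B.add_assoc (p ⊚ q) (p ⊹ q) (p ⊚ q)] at hd
    exact hd
  have c4 : p ⊚ q ⊹ (p ⊹ q) = p ⊹ q := by
    calc p ⊚ q ⊹ (p ⊹ q)
        = p ⊚ q ⊹ (p ⊚ q ⊹ ((p ⊹ q) ⊹ p ⊚ q)) := by rw [← c3]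
      _ = (p ⊚ q ⊹ p ⊚ q) ⊹ ((p ⊹ q) ⊹ p ⊚ q) := (B.add_assoc _ _ _).symm
      _ = p ⊚ q ⊹ ((p ⊹ q) ⊹ p ⊚ q) := by rw [ww]
      _ = p ⊹ q := c3.symm
  have c5 : p ⊚ q ⊹ (p ⊹ q) = p ⊚ q := by
    rw [← B.add_assoc (p ⊚ q) p q, wp, wq]
  rw [← c4, c5]

theorem ga (e x : S) (he : e ⊹ e = e) : e ⊚ x = e ⊹ x := by
  have ne := nidem B e he
  have me := maid B e he
  have d1 : ∀ t : S, e ⊚ (t ⊹ e) = t ⊹ e := by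
    intro t
    have hek : e ⊚ ((t ⊹ ∿t) ⊚ e) = (t ⊹ ∿t) ⊚ e := by
      rw [← B.mul_assoc e (t ⊹ ∿t) e]
      rw [mcomm B e (t ⊹ ∿t) me (maid B (t ⊹ ∿t) (eidem B t))]
      rw [B.mul_assoc (t ⊹ ∿t) e e, me]
    have hy : ∿(t ⊹ e) ⊹ (t ⊹ e) = (t ⊹ ∿t) ⊚ e := by
      rw [← ehcomm B (t ⊹ e)]
      rw [negadd B t e, ne]
      rw [B.add_assoc t e (e ⊹ ∿t), ← B.add_assoc e e (∿t), he]
      rw [central B e (∿t) he]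
      rw [← B.add_assoc t (∿t) e]
      exact tl B (t ⊹ ∿t) e (eidem B t) he
    have hk2 : (t ⊹ e) ⊚ (t ⊹ e)ꜝ = (t ⊹ ∿t) ⊚ e := by
      rw [B.weak (t ⊹ e)]; exact hy
    calc e ⊚ (t ⊹ e)
        = e ⊚ (((t ⊹ e) ⊚ (t ⊹ e)ꜝ) ⊚ (t ⊹ e)) := by rw [B.mul_reg (t ⊹ e)]
      _ = (e ⊚ ((t ⊹ e) ⊚ (t ⊹ e)ꜝ)) ⊚ (t ⊹ e) := (B.mul_assoc _ _ _).symm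
      _ = (e ⊚ ((t ⊹ ∿t) ⊚ e)) ⊚ (t ⊹ e) := by rw [hk2]
      _ = ((t ⊹ ∿t) ⊚ e) ⊚ (t ⊹ e) := by rw [hek]
      _ = ((t ⊹ e) ⊚ (t ⊹ e)ꜝ) ⊚ (t ⊹ e) := by rw [← hk2]
      _ = t ⊹ e := B.mul_reg (t ⊹ e)
  have d2 : ∀ t : S, e ⊚ t ⊹ e = t ⊹ e := by
    intro t
    have hd := B.dist e t e
    rw [ne, me] at hd
    rw [B.add_assoc (e ⊚ t) e e, he] at hd
    rw [d1 t] at hd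
    exact hd.symm
  have d3 : ∿(e ⊚ x) = ∿x ⊹ e := by
    rw [negmul B e x, ne]
    rw [d2 (∿x)]
    rw [← B.add_assoc e (∿x) e]
    rw [central B e (∿x) he]
    rw [B.add_assoc (∿x) e e, he]
  have h4 := congrArg B.neg d3
  rw [nn B (e ⊚ x)] at h4
  rw [negadd B (∿x) e, ne, nn B x] at h4
  exact h4

theorem main (z : S) :
    (∀ a b : S, B.mul (B.add a b) z =
        B.add (B.add (B.mul a z) (B.neg z)) (B.mul b z)) ↔
    (∀ a b : S, B.mul (B.add a b) z =
        B.add (B.mul a z) (B.mul (B.add (B.inv z) b) z)) := by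
  constructor
  · intro H a b
    have h1 := H a b
    have h2 := H (B.inv z) b
    rw [← B.clifford z, B.weak z] at h2
    rw [B.neg_reg z] at h2
    rw [h1, h2]
    rw [B.add_assoc]
  · intro H a b
    have f1 : ∀ c : S, (∿z ⊹ z) ⊹ ((zꜝ ⊹ c) ⊚ z) = (zꜝ ⊹ c) ⊚ z := by
      intro c
      have h := H (B.inv z) c
      rw [← B.clifford z, B.weak z] at h
      exact h.symm
    have f2 : ∀ c : S, (c ⊹ ∿c) ⊹ ((zꜝ ⊹ c) ⊚ z) = (zꜝ ⊹ c) ⊚ z := by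
      intro c
      have hc : (c ⊹ ∿c) ⊹ (zꜝ ⊹ c) = zꜝ ⊹ c := by
        rw [← B.add_assoc (c ⊹ ∿c) (zꜝ) c]
        rw [central B (c ⊹ ∿c) (zꜝ) (eidem B c)]
        rw [B.add_assoc (zꜝ) (c ⊹ ∿c) c]
        rw [B.add_reg c]
      have h := H (c ⊹ ∿c) (zꜝ ⊹ c)
      rw [hc] at h
      rw [ga B (c ⊹ ∿c) z (eidem B c)] at h
      calc (c ⊹ ∿c) ⊹ ((zꜝ ⊹ c) ⊚ z)
          = (c ⊹ ∿c) ⊹ (((c ⊹ ∿c) ⊹ z) ⊹ ((zꜝ ⊹ (zꜝ ⊹ c)) ⊚ z)) := by rw [h]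
        _ = ((c ⊹ ∿c) ⊹ ((c ⊹ ∿c) ⊹ z)) ⊹ ((zꜝ ⊹ (zꜝ ⊹ c)) ⊚ z) := (B.add_assoc _ _ _).symm
        _ = (((c ⊹ ∿c) ⊹ (c ⊹ ∿c)) ⊹ z) ⊹ ((zꜝ ⊹ (zꜝ ⊹ c)) ⊚ z) := by
              rw [B.add_assoc (c ⊹ ∿c) (c ⊹ ∿c) z]
        _ = ((c ⊹ ∿c) ⊹ z) ⊹ ((zꜝ ⊹ (zꜝ ⊹ c)) ⊚ z) := by rw [eidem B c]
        _ = (zꜝ ⊹ c) ⊚ z := h.symm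
    have f3 : (zꜝ ⊹ b) ⊚ z = ∿z ⊹ b ⊚ z := by
      have h := H (b ⊹ ∿b) b
      rw [B.add_reg b] at h
      rw [ga B (b ⊹ ∿b) z (eidem B b)] at h
      rw [h]
      rw [← B.add_assoc (∿z) ((b ⊹ ∿b) ⊹ z) ((zꜝ ⊹ b) ⊚ z)]
      rw [← B.add_assoc (∿z) (b ⊹ ∿b) z]
      rw [← central B (b ⊹ ∿b) (∿z) (eidem B b)]
      rw [B.add_assoc (b ⊹ ∿b) (∿z) z]
      rw [B.add_assoc (b ⊹ ∿b) (∿z ⊹ z) ((zꜝ ⊹ b) ⊚ z)]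
      rw [f1 b]
      rw [f2 b]
    have h := H a b
    rw [f3] at h
    rw [h, ← B.add_assoc (a ⊚ z) (∿z) (b ⊚ z)]

end Main
end DWBHelp

/-- In a dual weak brace, `(a + b)∘z = a∘z - z + b∘z` for all `a,b` is equivalent to
`(a + b)∘z = a∘z + (z⁻ + b)∘z` for all `a,b`. -/
theorem statement1 {S : Type*} (B : DualWeakBrace S) (z : S) :
    (∀ a b : S, B.mul (B.add a b) z =
        B.add (B.add (B.mul a z) (B.neg z)) (B.mul b z)) ↔
    (∀ a b : S, B.mul (B.add a b) z =
        B.add (B.mul a z) (B.mul (B.add (B.inv z) b) z)) :=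
  DWBHelp.main B z
end

section
/- Let (S, +, ∘) be a dual weak brace and z an element of its right distributor D_r(S). Then for all a, b ∈ S, σ_a^z(b) ∘ τ_b^z(a) = a ∘ b ∘ z ∘ z⁻, where σ_a^z(b) = -a ∘ z + a ∘ b ∘ z and τ_b^z(a) = (-a ∘ z + a ∘ b ∘ z)⁻ ∘ a ∘ b. -/
section Gen
variable {S : Type*} {m : S → S → S} {i : S → S}

private theorem gen_pt (assoc : ∀ a b c, m (m a b) c = m a (m b c))
    {p q r : S} (h : m p q = r) (x : S) : m p (m q x) = m r x := by
  rw [← assoc, h]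

private theorem gen_reg_pt (assoc : ∀ a b c, m (m a b) c = m a (m b c))
    (reg : ∀ a, m (m a (i a)) a = a) (a x : S) :
    m a (m (i a) (m a x)) = m a x := by
  rw [← assoc, ← assoc, reg]

private theorem gen_ireg_pt (assoc : ∀ a b c, m (m a b) c = m a (m b c))
    (ireg : ∀ a, m (m (i a) a) (i a) = i a) (a x : S) :
    m (i a) (m a (m (i a) x)) = m (i a) x := by
  rw [← assoc, ← assoc, ireg]

private theorem gen_inv_invol
    (reg : ∀ a, m (m a (i a)) a = a) (ireg : ∀ a, m (m (i a) a) (i a) = i a)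
    (uniq : ∀ a b, m (m a b) a = a → m (m b a) b = b → b = i a) (a : S) :
    i (i a) = a := (uniq (i a) a (ireg a) (reg a)).symm

private theorem gen_idem_inv
    (uniq : ∀ a b, m (m a b) a = a → m (m b a) b = b → b = i a)
    (e : S) (he : m e e = e) : i e = e :=
  (uniq e e (by rw [he, he]) (by rw [he, he])).symm

private theorem gen_idem_mul (assoc : ∀ a b c, m (m a b) c = m a (m b c))
    (reg : ∀ a, m (m a (i a)) a = a) (ireg : ∀ a, m (m (i a) a) (i a) = i a)
    (uniq : ∀ a b, m (m a b) a = a → m (m b a) b = b → b = i a)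
    (e f : S) (he : m e e = e) (hf : m f f = f) :
    m (m e f) (m e f) = m e f := by
  have hfp := gen_pt assoc hf
  have hep := gen_pt assoc he
  have h1 : m (m (m e f) (m f (m (i (m e f)) e))) (m e f) = m e f := by
    have h := reg (m e f)
    simp only [assoc] at h ⊢
    rw [hfp, hep]
    exact h
  have hir := gen_ireg_pt assoc ireg (m e f) e
  have hir' : m (i (m e f)) (m e (m f (m (i (m e f)) e))) = m (i (m e f)) e := by
    simp only [assoc] at hir; exact hir
  have h2 : m (m (m f (m (i (m e f)) e)) (m e f)) (m f (m (i (m e f)) e))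
      = m f (m (i (m e f)) e) := by
    simp only [assoc]
    rw [hep, hfp, hir']
  have h3 : m (m f (m (i (m e f)) e)) (m f (m (i (m e f)) e)) = m f (m (i (m e f)) e) := by
    simp only [assoc]
    rw [hir']
  have hj : m f (m (i (m e f)) e) = i (m e f) := uniq (m e f) _ h1 h2
  have hij : i (m f (m (i (m e f)) e)) = m f (m (i (m e f)) e) := gen_idem_inv uniq _ h3
  have hs : m e f = m f (m (i (m e f)) e) := by
    conv_lhs => rw [← gen_inv_invol reg ireg uniq (m e f), ← hj, hij]
  rw [hs]; exact h3

private theorem gen_E_comm (assoc : ∀ a b c, m (m a b) c = m a (m b c))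
    (reg : ∀ a, m (m a (i a)) a = a) (ireg : ∀ a, m (m (i a) a) (i a) = i a)
    (uniq : ∀ a b, m (m a b) a = a → m (m b a) b = b → b = i a)
    (e f : S) (he : m e e = e) (hf : m f f = f) :
    m e f = m f e := by
  have hfp := gen_pt assoc hf
  have hep := gen_pt assoc he
  have hs := gen_idem_mul assoc reg ireg uniq e f he hf
  have hs' := gen_idem_mul assoc reg ireg uniq f e hf he
  have hsn : m e (m f (m e f)) = m e f := by simp only [assoc] at hs; exact hs
  have hsn' : m f (m e (m f e)) = m f e := by simp only [assoc] at hs'; exact hs'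
  have c1 : m (m (m e f) (m f e)) (m e f) = m e f := by
    simp only [assoc]; rw [hfp, hep, hsn]
  have c2 : m (m (m f e) (m e f)) (m f e) = m f e := by
    simp only [assoc]; rw [hep, hfp, hsn']
  have := uniq (m e f) (m f e) c1 c2
  rw [this, gen_idem_inv uniq _ hs]

private theorem gen_inv_mul (assoc : ∀ a b c, m (m a b) c = m a (m b c))
    (reg : ∀ a, m (m a (i a)) a = a) (ireg : ∀ a, m (m (i a) a) (i a) = i a)
    (uniq : ∀ a b, m (m a b) a = a → m (m b a) b = b → b = i a)
    (a b : S) : i (m a b) = m (i b) (i a) := by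
  have idem_ea : m (m (i a) a) (m (i a) a) = m (i a) a := by
    have h := gen_ireg_pt assoc ireg a a
    simp only [assoc]; exact h
  have idem_fb : m (m b (i b)) (m b (i b)) = m b (i b) := by
    have h := gen_reg_pt assoc reg b (i b)
    simp only [assoc]; exact h
  have comm := gen_E_comm assoc reg ireg uniq _ _ idem_ea idem_fb
  have comm_pt : ∀ x, m (i a) (m a (m b (m (i b) x))) = m b (m (i b) (m (i a) (m a x))) := by
    intro x
    have h := congrArg (fun y => m y x) comm
    simp only [assoc] at h; exact h
  have c1 : m (m (m a b) (m (i b) (i a))) (m a b) = m a b := by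
    simp only [assoc]
    rw [← comm_pt b, gen_reg_pt assoc reg a (m b (m (i b) b))]
    have h := reg b; simp only [assoc] at h; rw [h]
  have c2 : m (m (m (i b) (i a)) (m a b)) (m (i b) (i a)) = m (i b) (i a) := by
    simp only [assoc]
    rw [comm_pt (i a), gen_ireg_pt assoc ireg b (m (i a) (m a (i a)))]
    have h := ireg a; simp only [assoc] at h; rw [h]
  exact (uniq (m a b) _ c1 c2).symm

end Gen

section Brace
variable {S : Type*} (B : DualWeakBrace S)

/-- Normalized distributivity. -/
private theorem dist' (a b c : S) :
    B.mul a (B.add b c) = B.add (B.mul a b) (B.add (B.neg a) (B.mul a c)) := by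
  rw [B.dist, B.add_assoc]

/-- Pointwise distributivity. -/
private theorem dist_pt (a c d x : S) :
    B.add (B.mul a c) (B.add (B.neg a) (B.add (B.mul a d) x))
      = B.add (B.mul a (B.add c d)) x := by
  rw [dist' B a c d]; simp only [B.add_assoc]

private theorem idem_g (x : S) :
    B.add (B.add x (B.neg x)) (B.add x (B.neg x)) = B.add x (B.neg x) := by
  rw [← B.add_assoc (B.add x (B.neg x)) x (B.neg x), B.add_reg x]

/-- `-(a∘c) = -a + a∘(-c) + (-a)`. -/
private theorem bnebg_mul (a c : S) :
    B.neg (B.mul a c) = B.add (B.neg a) (B.add (B.mul a (B.neg c)) (B.neg a)) := by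
  refine (B.neg_unique (B.mul a c) _ ?_ ?_).symm
  · simp only [B.add_assoc]
    rw [dist_pt B a c (B.neg c) (B.add (B.neg a) (B.mul a c)),
      ← dist' B a (B.add c (B.neg c)) c, B.add_reg c]
  · simp only [B.add_assoc]
    rw [dist_pt B a c (B.neg c) (B.neg a),
      dist_pt B a (B.neg c) (B.add c (B.neg c)) (B.neg a),
      ← B.add_assoc (B.neg c) c (B.neg c), B.neg_reg c]

section Dr
variable {z : S} (hz : z ∈ B.Dr)
include hz

/-- Pointwise right-distributivity for `z ∈ D_r`. -/
private theorem hz_pt (a b x : S) :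
    B.add (B.mul a z) (B.add (B.neg z) (B.add (B.mul b z) x))
      = B.add (B.mul (B.add a b) z) x := by
  rw [hz a b]; simp only [B.add_assoc]

/-- `-(a∘z) = -z + (-a)∘z + (-z)`. -/
private theorem bnebg_mul_z (a : S) :
    B.neg (B.mul a z) = B.add (B.neg z) (B.add (B.mul (B.neg a) z) (B.neg z)) := by
  refine (B.neg_unique (B.mul a z) _ ?_ ?_).symm
  · simp only [B.add_assoc]
    rw [hz_pt B hz a (B.neg a) (B.add (B.neg z) (B.mul a z))]
    have h := hz (B.add a (B.neg a)) a
    simp only [B.add_assoc] at h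
    rw [← h]
    have h2 := B.add_reg a
    simp only [B.add_assoc] at h2
    rw [h2]
  · simp only [B.add_assoc]
    rw [hz_pt B hz (B.neg a) a (B.add (B.neg z) (B.add (B.mul (B.neg a) z) (B.neg z))),
      hz_pt B hz (B.add (B.neg a) a) (B.neg a) (B.neg z), B.neg_reg a]

/-- `g_{a∘z} = g_a∘z - z`. -/
private theorem bg_mul_z (a : S) :
    B.add (B.mul a z) (B.neg (B.mul a z))
      = B.add (B.mul (B.add a (B.neg a)) z) (B.neg z) := by
  rw [bnebg_mul_z B hz a, hz_pt B hz a (B.neg a) (B.neg z)]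

end Dr

/-- `g_{a∘c} = a∘g_c - a`. -/
private theorem bg_mul (a c : S) :
    B.add (B.mul a c) (B.neg (B.mul a c))
      = B.add (B.mul a (B.add c (B.neg c))) (B.neg a) := by
  rw [bnebg_mul B a c, dist_pt B a c (B.neg c) (B.neg a)]

/-- Claim C: `g_{a∘c} + g_a = g_{a∘c}`. -/
private theorem claimC (a c : S) :
    B.add (B.add (B.mul a c) (B.neg (B.mul a c))) (B.add a (B.neg a))
      = B.add (B.mul a c) (B.neg (B.mul a c)) := by
  rw [bg_mul B a c]
  simp only [B.add_assoc]
  rw [← B.add_assoc (B.neg a) a (B.neg a), B.neg_reg a]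


private theorem key2 (p z : S) :
    B.mul (B.mul (B.mul p z) (B.inv (B.mul p z))) p = B.mul (B.mul p z) (B.inv z) := by
  rw [gen_inv_mul B.mul_assoc B.mul_reg B.inv_reg B.inv_unique p z]
  have idem_e : B.mul (B.mul z (B.inv z)) (B.mul z (B.inv z)) = B.mul z (B.inv z) := by
    have h := gen_reg_pt B.mul_assoc B.mul_reg z (B.inv z)
    simp only [B.mul_assoc]; exact h
  have idem_f : B.mul (B.mul (B.inv p) p) (B.mul (B.inv p) p) = B.mul (B.inv p) p := by
    have h := gen_ireg_pt B.mul_assoc B.inv_reg p p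
    simp only [B.mul_assoc]; exact h
  have comm := gen_E_comm B.mul_assoc B.mul_reg B.inv_reg B.inv_unique _ _ idem_e idem_f
  simp only [B.mul_assoc] at comm ⊢
  rw [comm, gen_reg_pt B.mul_assoc B.mul_reg p (B.mul z (B.inv z))]

section Dr2
variable {z : S} (hz : z ∈ B.Dr)
include hz

private theorem claimD (a b : S) :
    B.add (B.add (B.mul (B.mul a b) z) (B.neg (B.mul (B.mul a b) z)))
        (B.add (B.mul a z) (B.neg (B.mul a z)))
      = B.add (B.mul (B.mul a b) z) (B.neg (B.mul (B.mul a b) z)) := by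
  rw [bg_mul_z B hz (B.mul a b), bg_mul_z B hz a]
  simp only [B.add_assoc]
  rw [hz_pt B hz (B.add (B.mul a b) (B.neg (B.mul a b))) (B.add a (B.neg a)) (B.neg z),
    claimC B a b, ← bg_mul_z B hz (B.mul a b)]

private theorem key1 (a b : S) :
    B.add (B.neg (B.sigma z a b)) (B.sigma z a b)
      = B.add (B.neg (B.mul (B.mul a b) z)) (B.mul (B.mul a b) z) := by
  rw [show B.sigma z a b = B.add (B.neg (B.mul a z)) (B.mul (B.mul a b) z) from rfl]
  rw [gen_inv_mul B.add_assoc B.add_reg B.neg_reg B.neg_unique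
      (B.neg (B.mul a z)) (B.mul (B.mul a b) z),
    gen_inv_invol B.add_reg B.neg_reg B.neg_unique (B.mul a z)]
  have step : B.add (B.add (B.mul a z) (B.neg (B.mul a z))) (B.mul (B.mul a b) z)
      = B.mul (B.mul a b) z := by
    calc B.add (B.add (B.mul a z) (B.neg (B.mul a z))) (B.mul (B.mul a b) z)
        = B.add (B.add (B.mul a z) (B.neg (B.mul a z)))
            (B.add (B.add (B.mul (B.mul a b) z) (B.neg (B.mul (B.mul a b) z)))
              (B.mul (B.mul a b) z)) := by
          rw [B.add_reg (B.mul (B.mul a b) z)]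
      _ = B.add (B.add (B.add (B.mul a z) (B.neg (B.mul a z)))
            (B.add (B.mul (B.mul a b) z) (B.neg (B.mul (B.mul a b) z))))
              (B.mul (B.mul a b) z) := by
          rw [← B.add_assoc (B.add (B.mul a z) (B.neg (B.mul a z)))
            (B.add (B.mul (B.mul a b) z) (B.neg (B.mul (B.mul a b) z))) (B.mul (B.mul a b) z)]
      _ = B.add (B.add (B.add (B.mul (B.mul a b) z) (B.neg (B.mul (B.mul a b) z)))
            (B.add (B.mul a z) (B.neg (B.mul a z)))) (B.mul (B.mul a b) z) := by
          rw [gen_E_comm B.add_assoc B.add_reg B.neg_reg B.neg_unique _ _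
            (idem_g B (B.mul a z)) (idem_g B (B.mul (B.mul a b) z))]
      _ = B.add (B.add (B.mul (B.mul a b) z) (B.neg (B.mul (B.mul a b) z)))
            (B.mul (B.mul a b) z) := by rw [claimD B hz a b]
      _ = B.mul (B.mul a b) z := B.add_reg (B.mul (B.mul a b) z)
  simp only [B.add_assoc]
  rw [← B.add_assoc (B.mul a z) (B.neg (B.mul a z)) (B.mul (B.mul a b) z), step]

end Dr2

end Brace


/-- For `z ∈ D_r(S)`, `σ_a^z(b) ∘ τ_b^z(a) = a ∘ b ∘ z ∘ z⁻`. -/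
theorem statement2 {S : Type*} (B : DualWeakBrace S) (z : S) (hz : z ∈ B.Dr) :
    ∀ a b : S, B.mul (B.sigma z a b) (B.tau z b a) =
      B.mul (B.mul (B.mul a b) z) (B.inv z) := by
  intro a b
  show B.mul (B.sigma z a b) (B.mul (B.mul (B.inv (B.sigma z a b)) a) b) = _
  rw [B.mul_assoc (B.inv (B.sigma z a b)) a b,
    ← B.mul_assoc (B.sigma z a b) (B.inv (B.sigma z a b)) (B.mul a b),
    B.weak (B.sigma z a b), key1 B hz a b, ← B.weak (B.mul (B.mul a b) z),
    key2 B (B.mul a b) z]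
end

section
/- Let (S, +, ∘) be a dual weak brace and z ∈ D_r(S). Then for all a, b ∈ S, σ_a^z(b) ∘ (σ_a^z(b))⁻ = a ∘ a⁻ + b ∘ b⁻ + z ∘ z⁻, where σ_a^z(b) = -a ∘ z + a ∘ b ∘ z. -/
namespace DWB
section Gen
variable {M : Type*} (op : M → M → M) (iv : M → M)
local infixl:70 " ⬝ " => op

structure ISAx : Prop where
  assoc : ∀ a b c : M, a ⬝ b ⬝ c = a ⬝ (b ⬝ c)
  reg1 : ∀ a : M, a ⬝ iv a ⬝ a = a
  reg2 : ∀ a : M, iv a ⬝ a ⬝ iv a = iv a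
  uniq : ∀ a b : M, a ⬝ b ⬝ a = a → b ⬝ a ⬝ b = b → b = iv a

variable {op iv}

theorem iv_iv (h : ISAx op iv) (a : M) : iv (iv a) = a :=
  (h.uniq (iv a) a (h.reg2 a) (h.reg1 a)).symm

theorem idem_iv (h : ISAx op iv) {e : M} (he : e ⬝ e = e) : iv e = e :=
  (h.uniq e e (by rw [he, he]) (by rw [he, he])).symm

theorem idem1 (h : ISAx op iv) (a : M) : (a ⬝ iv a) ⬝ (a ⬝ iv a) = a ⬝ iv a := by
  rw [← h.assoc, h.reg1]

theorem idem2 (h : ISAx op iv) (a : M) : (iv a ⬝ a) ⬝ (iv a ⬝ a) = iv a ⬝ a := by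
  rw [← h.assoc, h.reg2]

theorem idem_op (h : ISAx op iv) {e f : M} (he : e ⬝ e = e) (hf : f ⬝ f = f) :
    (e ⬝ f) ⬝ (e ⬝ f) = e ⬝ f := by
  have hx1 : (e ⬝ f) ⬝ iv (e ⬝ f) ⬝ (e ⬝ f) = e ⬝ f := h.reg1 (e ⬝ f)
  have hx2 : iv (e ⬝ f) ⬝ (e ⬝ f) ⬝ iv (e ⬝ f) = iv (e ⬝ f) := h.reg2 (e ⬝ f)
  have hg_idem : (f ⬝ (iv (e ⬝ f) ⬝ e)) ⬝ (f ⬝ (iv (e ⬝ f) ⬝ e)) = f ⬝ (iv (e ⬝ f) ⬝ e) := by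
    calc (f ⬝ (iv (e ⬝ f) ⬝ e)) ⬝ (f ⬝ (iv (e ⬝ f) ⬝ e))
        = f ⬝ ((iv (e ⬝ f) ⬝ (e ⬝ f) ⬝ iv (e ⬝ f)) ⬝ e) := by simp only [h.assoc]
      _ = f ⬝ (iv (e ⬝ f) ⬝ e) := by rw [hx2]
  have hcond1 : (e ⬝ f) ⬝ (f ⬝ (iv (e ⬝ f) ⬝ e)) ⬝ (e ⬝ f) = e ⬝ f := by
    calc (e ⬝ f) ⬝ (f ⬝ (iv (e ⬝ f) ⬝ e)) ⬝ (e ⬝ f)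
        = e ⬝ ((f ⬝ f) ⬝ (iv (e ⬝ f) ⬝ ((e ⬝ e) ⬝ f))) := by simp only [h.assoc]
      _ = e ⬝ (f ⬝ (iv (e ⬝ f) ⬝ (e ⬝ f))) := by rw [hf, he]
      _ = (e ⬝ f) ⬝ iv (e ⬝ f) ⬝ (e ⬝ f) := by simp only [h.assoc]
      _ = e ⬝ f := hx1
  have hcond2 : (f ⬝ (iv (e ⬝ f) ⬝ e)) ⬝ (e ⬝ f) ⬝ (f ⬝ (iv (e ⬝ f) ⬝ e))
      = f ⬝ (iv (e ⬝ f) ⬝ e) := by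
    calc (f ⬝ (iv (e ⬝ f) ⬝ e)) ⬝ (e ⬝ f) ⬝ (f ⬝ (iv (e ⬝ f) ⬝ e))
        = f ⬝ (iv (e ⬝ f) ⬝ ((e ⬝ e) ⬝ ((f ⬝ f) ⬝ (iv (e ⬝ f) ⬝ e)))) := by simp only [h.assoc]
      _ = f ⬝ (iv (e ⬝ f) ⬝ (e ⬝ (f ⬝ (iv (e ⬝ f) ⬝ e)))) := by rw [he, hf]
      _ = f ⬝ ((iv (e ⬝ f) ⬝ (e ⬝ f) ⬝ iv (e ⬝ f)) ⬝ e) := by simp only [h.assoc]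
      _ = f ⬝ (iv (e ⬝ f) ⬝ e) := by rw [hx2]
  have hgx : f ⬝ (iv (e ⬝ f) ⬝ e) = iv (e ⬝ f) := h.uniq _ _ hcond1 hcond2
  have hxx : iv (e ⬝ f) ⬝ iv (e ⬝ f) = iv (e ⬝ f) := by rw [← hgx]; exact hg_idem
  have hef : e ⬝ f = iv (e ⬝ f) := by
    rw [← idem_iv h hxx, iv_iv h]
  rw [hef]; exact hxx

theorem idem_comm (h : ISAx op iv) {e f : M} (he : e ⬝ e = e) (hf : f ⬝ f = f) :
    e ⬝ f = f ⬝ e := by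
  have hef := idem_op h he hf
  have hfe := idem_op h hf he
  have c1 : (e ⬝ f) ⬝ (f ⬝ e) ⬝ (e ⬝ f) = e ⬝ f := by
    calc (e ⬝ f) ⬝ (f ⬝ e) ⬝ (e ⬝ f)
        = e ⬝ ((f ⬝ f) ⬝ ((e ⬝ e) ⬝ f)) := by simp only [h.assoc]
      _ = e ⬝ (f ⬝ (e ⬝ f)) := by rw [hf, he]
      _ = (e ⬝ f) ⬝ (e ⬝ f) := by simp only [h.assoc]
      _ = e ⬝ f := hef
  have c2 : (f ⬝ e) ⬝ (e ⬝ f) ⬝ (f ⬝ e) = f ⬝ e := by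
    calc (f ⬝ e) ⬝ (e ⬝ f) ⬝ (f ⬝ e)
        = f ⬝ ((e ⬝ e) ⬝ ((f ⬝ f) ⬝ e)) := by simp only [h.assoc]
      _ = f ⬝ (e ⬝ (f ⬝ e)) := by rw [he, hf]
      _ = (f ⬝ e) ⬝ (f ⬝ e) := by simp only [h.assoc]
      _ = f ⬝ e := hfe
  have : f ⬝ e = iv (e ⬝ f) := h.uniq _ _ c1 c2
  rw [this, idem_iv h hef]

theorem iv_op (h : ISAx op iv) (a b : M) : iv (a ⬝ b) = iv b ⬝ iv a := by
  have c1 : (a ⬝ b) ⬝ (iv b ⬝ iv a) ⬝ (a ⬝ b) = a ⬝ b := by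
    calc (a ⬝ b) ⬝ (iv b ⬝ iv a) ⬝ (a ⬝ b)
        = a ⬝ (((b ⬝ iv b) ⬝ (iv a ⬝ a)) ⬝ b) := by simp only [h.assoc]
      _ = a ⬝ (((iv a ⬝ a) ⬝ (b ⬝ iv b)) ⬝ b) := by
          rw [idem_comm h (idem1 h b) (idem2 h a)]
      _ = (a ⬝ iv a ⬝ a) ⬝ (b ⬝ iv b ⬝ b) := by simp only [h.assoc]
      _ = a ⬝ b := by rw [h.reg1, h.reg1]
  have c2 : (iv b ⬝ iv a) ⬝ (a ⬝ b) ⬝ (iv b ⬝ iv a) = iv b ⬝ iv a := by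
    calc (iv b ⬝ iv a) ⬝ (a ⬝ b) ⬝ (iv b ⬝ iv a)
        = iv b ⬝ (((iv a ⬝ a) ⬝ (b ⬝ iv b)) ⬝ iv a) := by simp only [h.assoc]
      _ = iv b ⬝ (((b ⬝ iv b) ⬝ (iv a ⬝ a)) ⬝ iv a) := by
          rw [idem_comm h (idem2 h a) (idem1 h b)]
      _ = (iv b ⬝ b ⬝ iv b) ⬝ (iv a ⬝ a ⬝ iv a) := by simp only [h.assoc]
      _ = iv b ⬝ iv a := by rw [h.reg2, h.reg2]
  exact (h.uniq _ _ c1 c2).symm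

end Gen

section Brace
variable {S : Type*} (B : DualWeakBrace S)
local infixl:65 " ⊹ " => B.add
local infixl:70 " ⊠ " => B.mul
local prefix:max "∸" => B.neg
local postfix:max "ᵛ" => B.inv

theorem addAx : ISAx B.add B.neg :=
  ⟨B.add_assoc, B.add_reg, B.neg_reg, B.neg_unique⟩

theorem mulAx : ISAx B.mul B.inv :=
  ⟨B.mul_assoc, B.mul_reg, B.inv_reg, B.inv_unique⟩

/-- multiplicative idempotents are central. -/
theorem central {e : S} (he : e ⊠ e = e) (a : S) : a ⊠ e = e ⊠ a := by
  have hiv : (e ⊠ a)ᵛ = aᵛ ⊠ e := by rw [iv_op (mulAx B), idem_iv (mulAx B) he]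
  have h1 : e ⊠ (a ⊠ aᵛ) = aᵛ ⊠ (e ⊠ a) := by
    have hc := B.clifford (e ⊠ a)
    rw [hiv] at hc
    calc e ⊠ (a ⊠ aᵛ) = (e ⊠ e) ⊠ (a ⊠ aᵛ) := by rw [he]
      _ = e ⊠ (e ⊠ (a ⊠ aᵛ)) := by simp only [B.mul_assoc]
      _ = e ⊠ ((a ⊠ aᵛ) ⊠ e) := by rw [idem_comm (mulAx B) (idem1 (mulAx B) a) he]
      _ = (e ⊠ a) ⊠ (aᵛ ⊠ e) := by simp only [B.mul_assoc]
      _ = (aᵛ ⊠ e) ⊠ (e ⊠ a) := hc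
      _ = aᵛ ⊠ ((e ⊠ e) ⊠ a) := by simp only [B.mul_assoc]
      _ = aᵛ ⊠ (e ⊠ a) := by rw [he]
  calc a ⊠ e = ((a ⊠ aᵛ) ⊠ a) ⊠ e := by rw [B.mul_reg]
    _ = a ⊠ ((aᵛ ⊠ a) ⊠ e) := by simp only [B.mul_assoc]
    _ = a ⊠ (e ⊠ (aᵛ ⊠ a)) := by rw [idem_comm (mulAx B) (idem2 (mulAx B) a) he]
    _ = a ⊠ (e ⊠ (a ⊠ aᵛ)) := by rw [B.clifford a]
    _ = a ⊠ (aᵛ ⊠ (e ⊠ a)) := by rw [h1]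
    _ = ((a ⊠ aᵛ) ⊠ e) ⊠ a := by simp only [B.mul_assoc]
    _ = (e ⊠ (a ⊠ aᵛ)) ⊠ a := by rw [idem_comm (mulAx B) (idem1 (mulAx B) a) he]
    _ = e ⊠ ((a ⊠ aᵛ) ⊠ a) := by simp only [B.mul_assoc]
    _ = e ⊠ a := by rw [B.mul_reg]

/-- multiplicative idempotent → additive idempotent. -/
theorem m2a {e : S} (he : e ⊠ e = e) : e ⊹ e = e := by
  have h1 : e = ∸e ⊹ e := by
    have hw := B.weak e
    rw [idem_iv (mulAx B) he, he] at hw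
    exact hw
  calc e ⊹ e = (∸e ⊹ e) ⊹ (∸e ⊹ e) := by rw [← h1]
    _ = ∸e ⊹ e := idem2 (addAx B) e
    _ = e := h1.symm

/-- additive idempotent → multiplicative idempotent. -/
theorem a2m {g : S} (hg : g ⊹ g = g) : g ⊠ g = g := by
  have h0 : ∸g = g := idem_iv (addAx B) hg
  have h1 : g ⊠ gᵛ = g := by rw [B.weak g, h0]; exact hg
  have h2 := B.mul_reg g
  rw [h1] at h2
  exact h2

/-- For idempotents, product equals sum. -/
theorem eprod {e f : S} (he : e ⊠ e = e) (hf : f ⊠ f = f) : e ⊠ f = e ⊹ f := by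
  have hea : e ⊹ e = e := m2a B he
  have hfa : f ⊹ f = f := m2a B hf
  have hef_m : (e ⊠ f) ⊠ (e ⊠ f) = e ⊠ f := idem_op (mulAx B) he hf
  have hef_a : (e ⊠ f) ⊹ (e ⊠ f) = e ⊠ f := m2a B hef_m
  have hene : ∸e = e := idem_iv (addAx B) hea
  have hfne : ∸f = f := idem_iv (addAx B) hfa
  have s1 : e ⊠ f = (e ⊠ f) ⊹ e := by
    have d := B.dist e f f
    rw [hfa, hene] at d
    calc e ⊠ f = ((e ⊠ f) ⊹ e) ⊹ (e ⊠ f) := d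
      _ = (e ⊠ f) ⊹ (e ⊹ (e ⊠ f)) := by simp only [B.add_assoc]
      _ = (e ⊠ f) ⊹ ((e ⊠ f) ⊹ e) := by rw [idem_comm (addAx B) hea hef_a]
      _ = ((e ⊠ f) ⊹ (e ⊠ f)) ⊹ e := by simp only [B.add_assoc]
      _ = (e ⊠ f) ⊹ e := by rw [hef_a]
  have s1' : e ⊠ f = e ⊹ (e ⊠ f) := s1.trans (idem_comm (addAx B) hef_a hea)
  have hfe : f ⊠ e = e ⊠ f := idem_comm (mulAx B) hf he
  have s2 : e ⊠ f = (e ⊠ f) ⊹ f := by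
    have d := B.dist f e e
    rw [hea, hfne, hfe] at d
    calc e ⊠ f = ((e ⊠ f) ⊹ f) ⊹ (e ⊠ f) := d
      _ = (e ⊠ f) ⊹ (f ⊹ (e ⊠ f)) := by simp only [B.add_assoc]
      _ = (e ⊠ f) ⊹ ((e ⊠ f) ⊹ f) := by rw [idem_comm (addAx B) hfa hef_a]
      _ = ((e ⊠ f) ⊹ (e ⊠ f)) ⊹ f := by simp only [B.add_assoc]
      _ = (e ⊠ f) ⊹ f := by rw [hef_a]
  have s2' : e ⊠ f = f ⊹ (e ⊠ f) := s2.trans (idem_comm (addAx B) hef_a hfa)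
  have hga : (e ⊹ f) ⊹ (e ⊹ f) = e ⊹ f := idem_op (addAx B) hea hfa
  have hg_m : (e ⊹ f) ⊠ (e ⊹ f) = e ⊹ f := a2m B hga
  have hgne : ∸(e ⊹ f) = e ⊹ f := idem_iv (addAx B) hga
  have hge : (e ⊹ f) ⊠ e = e ⊠ f := by
    have d := B.dist e e f
    rw [he, hene] at d
    calc (e ⊹ f) ⊠ e = e ⊠ (e ⊹ f) := central B he (e ⊹ f)
      _ = (e ⊹ e) ⊹ (e ⊠ f) := d
      _ = e ⊹ (e ⊠ f) := by rw [hea]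
      _ = e ⊠ f := s1'.symm
  have hgf : (e ⊹ f) ⊠ f = e ⊠ f := by
    have d := B.dist f e f
    rw [hf, hfne, hfe] at d
    calc (e ⊹ f) ⊠ f = f ⊠ (e ⊹ f) := central B hf (e ⊹ f)
      _ = ((e ⊠ f) ⊹ f) ⊹ f := d
      _ = (e ⊠ f) ⊹ (f ⊹ f) := by simp only [B.add_assoc]
      _ = (e ⊠ f) ⊹ f := by rw [hfa]
      _ = e ⊠ f := s2.symm
  have s3 : e ⊹ f = (e ⊹ f) ⊹ (e ⊠ f) := by
    have d := B.dist (e ⊹ f) e f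
    rw [hge, hgf, hgne, hg_m] at d
    calc e ⊹ f = ((e ⊠ f) ⊹ (e ⊹ f)) ⊹ (e ⊠ f) := d
      _ = (e ⊠ f) ⊹ ((e ⊹ f) ⊹ (e ⊠ f)) := by simp only [B.add_assoc]
      _ = (e ⊠ f) ⊹ ((e ⊠ f) ⊹ (e ⊹ f)) := by rw [idem_comm (addAx B) hga hef_a]
      _ = ((e ⊠ f) ⊹ (e ⊠ f)) ⊹ (e ⊹ f) := by simp only [B.add_assoc]
      _ = (e ⊠ f) ⊹ (e ⊹ f) := by rw [hef_a]
      _ = (e ⊹ f) ⊹ (e ⊠ f) := idem_comm (addAx B) hef_a hga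
  calc e ⊠ f = e ⊹ (e ⊠ f) := s1'
    _ = e ⊹ (f ⊹ (e ⊠ f)) := by rw [← s2']
    _ = (e ⊹ f) ⊹ (e ⊠ f) := by simp only [B.add_assoc]
    _ = e ⊹ f := s3.symm

/-- λ_a combines sums. -/
theorem hlam (a x y : S) :
    (∸a ⊹ (a ⊠ x)) ⊹ (∸a ⊹ (a ⊠ y)) = ∸a ⊹ (a ⊠ (x ⊹ y)) := by
  calc (∸a ⊹ (a ⊠ x)) ⊹ (∸a ⊹ (a ⊠ y))
      = ∸a ⊹ (((a ⊠ x) ⊹ ∸a) ⊹ (a ⊠ y)) := by simp only [B.add_assoc]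
    _ = ∸a ⊹ (a ⊠ (x ⊹ y)) := by rw [← B.dist]

theorem lam_neg (a c : S) : ∸(∸a ⊹ (a ⊠ c)) = ∸a ⊹ (a ⊠ ∸c) := by
  have c1 : ((∸a ⊹ (a ⊠ c)) ⊹ (∸a ⊹ (a ⊠ ∸c))) ⊹ (∸a ⊹ (a ⊠ c)) = ∸a ⊹ (a ⊠ c) := by
    rw [hlam B a c (∸c), hlam B a (c ⊹ ∸c) c, B.add_reg]
  have c2 : ((∸a ⊹ (a ⊠ ∸c)) ⊹ (∸a ⊹ (a ⊠ c))) ⊹ (∸a ⊹ (a ⊠ ∸c)) = ∸a ⊹ (a ⊠ ∸c) := by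
    rw [hlam B a (∸c) c, hlam B a (∸c ⊹ c) (∸c), B.neg_reg]
  exact (B.neg_unique _ _ c1 c2).symm

/-- Key absorption: for an additive idempotent g, `-v + v∘g = -(v∘g) + v∘g`. -/
theorem keystar {g : S} (hg : g ⊹ g = g) (v : S) :
    ∸v ⊹ (v ⊠ g) = ∸(v ⊠ g) ⊹ (v ⊠ g) := by
  have hk : v ⊠ g = ((v ⊠ g) ⊹ ∸v) ⊹ (v ⊠ g) := by
    have d := B.dist v g g
    rw [hg] at d
    exact d
  have hk' : (v ⊠ g) ⊹ (∸v ⊹ (v ⊠ g)) = v ⊠ g := by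
    rw [← B.add_assoc]; exact hk.symm
  have lam_idem : (∸v ⊹ (v ⊠ g)) ⊹ (∸v ⊹ (v ⊠ g)) = ∸v ⊹ (v ⊠ g) := by
    calc (∸v ⊹ (v ⊠ g)) ⊹ (∸v ⊹ (v ⊠ g))
        = ∸v ⊹ ((v ⊠ g) ⊹ (∸v ⊹ (v ⊠ g))) := by simp only [B.add_assoc]
      _ = ∸v ⊹ (v ⊠ g) := by rw [hk']
  have absorb2 : (∸v ⊹ (v ⊠ g)) ⊹ (∸(v ⊠ g) ⊹ (v ⊠ g)) = ∸v ⊹ (v ⊠ g) := by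
    calc (∸v ⊹ (v ⊠ g)) ⊹ (∸(v ⊠ g) ⊹ (v ⊠ g))
        = ∸v ⊹ (((v ⊠ g) ⊹ ∸(v ⊠ g)) ⊹ (v ⊠ g)) := by simp only [B.add_assoc]
      _ = ∸v ⊹ (v ⊠ g) := by rw [B.add_reg]
  have absorb1 : (∸(v ⊠ g) ⊹ (v ⊠ g)) ⊹ (∸v ⊹ (v ⊠ g)) = ∸(v ⊠ g) ⊹ (v ⊠ g) := by
    calc (∸(v ⊠ g) ⊹ (v ⊠ g)) ⊹ (∸v ⊹ (v ⊠ g))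
        = ∸(v ⊠ g) ⊹ ((v ⊠ g) ⊹ (∸v ⊹ (v ⊠ g))) := by simp only [B.add_assoc]
      _ = ∸(v ⊠ g) ⊹ (v ⊠ g) := by rw [hk']
  calc ∸v ⊹ (v ⊠ g) = (∸v ⊹ (v ⊠ g)) ⊹ (∸(v ⊠ g) ⊹ (v ⊠ g)) := absorb2.symm
    _ = (∸(v ⊠ g) ⊹ (v ⊠ g)) ⊹ (∸v ⊹ (v ⊠ g)) :=
        idem_comm (addAx B) lam_idem (idem2 (addAx B) (v ⊠ g))
    _ = ∸(v ⊠ g) ⊹ (v ⊠ g) := absorb1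

end Brace

section Final
variable {S : Type*} (B : DualWeakBrace S)
local infixl:65 " ⊹ " => B.add
local infixl:70 " ⊠ " => B.mul
local prefix:max "∸" => B.neg
local postfix:max "ᵛ" => B.inv

theorem Hstep {g : S} (hg : g ⊠ g = g) (v : S) :
    (v ⊠ g) ⊠ (v ⊠ g)ᵛ = g ⊠ (v ⊠ vᵛ) := by
  have hgi : gᵛ = g := idem_iv (mulAx B) hg
  calc (v ⊠ g) ⊠ (v ⊠ g)ᵛ = (v ⊠ g) ⊠ (g ⊠ vᵛ) := by rw [iv_op (mulAx B), hgi]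
    _ = v ⊠ ((g ⊠ g) ⊠ vᵛ) := by simp only [B.mul_assoc]
    _ = v ⊠ (g ⊠ vᵛ) := by rw [hg]
    _ = (v ⊠ g) ⊠ vᵛ := (B.mul_assoc _ _ _).symm
    _ = (g ⊠ v) ⊠ vᵛ := by rw [central B hg v]
    _ = g ⊠ (v ⊠ vᵛ) := B.mul_assoc _ _ _

theorem main (a b z : S) :
    (∸(a ⊠ z) ⊹ ((a ⊠ b) ⊠ z)) ⊠ ((∸(a ⊠ z) ⊹ ((a ⊠ b) ⊠ z))ᵛ)
      = ((a ⊠ aᵛ) ⊹ (b ⊠ bᵛ)) ⊹ (z ⊠ zᵛ) := by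
  have hea : (a ⊠ aᵛ) ⊠ (a ⊠ aᵛ) = a ⊠ aᵛ := idem1 (mulAx B) a
  have heb : (b ⊠ bᵛ) ⊠ (b ⊠ bᵛ) = b ⊠ bᵛ := idem1 (mulAx B) b
  have hez : (z ⊠ zᵛ) ⊠ (z ⊠ zᵛ) = z ⊠ zᵛ := idem1 (mulAx B) z
  have hA : (a ⊠ z) ⊠ (zᵛ ⊠ (b ⊠ z)) = (a ⊠ b) ⊠ z := by
    calc (a ⊠ z) ⊠ (zᵛ ⊠ (b ⊠ z))
        = a ⊠ (((z ⊠ zᵛ) ⊠ b) ⊠ z) := by simp only [B.mul_assoc]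
      _ = a ⊠ ((b ⊠ (z ⊠ zᵛ)) ⊠ z) := by rw [central B hez b]
      _ = (a ⊠ b) ⊠ ((z ⊠ zᵛ) ⊠ z) := by simp only [B.mul_assoc]
      _ = (a ⊠ b) ⊠ z := by rw [B.mul_reg]
  have hw_inv : (zᵛ ⊠ (b ⊠ z))ᵛ = (zᵛ ⊠ bᵛ) ⊠ z := by
    rw [iv_op (mulAx B), iv_op (mulAx B), iv_iv (mulAx B)]
  have hF : (zᵛ ⊠ (b ⊠ z)) ⊠ (zᵛ ⊠ (b ⊠ z))ᵛ = (b ⊠ bᵛ) ⊠ (z ⊠ zᵛ) := by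
    rw [hw_inv]
    calc (zᵛ ⊠ (b ⊠ z)) ⊠ ((zᵛ ⊠ bᵛ) ⊠ z)
        = zᵛ ⊠ (b ⊠ (((z ⊠ zᵛ) ⊠ bᵛ) ⊠ z)) := by simp only [B.mul_assoc]
      _ = zᵛ ⊠ (b ⊠ ((bᵛ ⊠ (z ⊠ zᵛ)) ⊠ z)) := by rw [central B hez bᵛ]
      _ = zᵛ ⊠ ((b ⊠ bᵛ) ⊠ ((z ⊠ zᵛ) ⊠ z)) := by simp only [B.mul_assoc]
      _ = zᵛ ⊠ ((b ⊠ bᵛ) ⊠ z) := by rw [B.mul_reg]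
      _ = (zᵛ ⊠ (b ⊠ bᵛ)) ⊠ z := (B.mul_assoc _ _ _).symm
      _ = ((b ⊠ bᵛ) ⊠ zᵛ) ⊠ z := by rw [central B heb zᵛ]
      _ = (b ⊠ bᵛ) ⊠ (zᵛ ⊠ z) := B.mul_assoc _ _ _
      _ = (b ⊠ bᵛ) ⊠ (z ⊠ zᵛ) := by rw [← B.clifford z]
  have hg_m : ((b ⊠ bᵛ) ⊠ (z ⊠ zᵛ)) ⊠ ((b ⊠ bᵛ) ⊠ (z ⊠ zᵛ)) = (b ⊠ bᵛ) ⊠ (z ⊠ zᵛ) :=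
    idem_op (mulAx B) heb hez
  have hg_a : ((b ⊠ bᵛ) ⊠ (z ⊠ zᵛ)) ⊹ ((b ⊠ bᵛ) ⊠ (z ⊠ zᵛ)) = (b ⊠ bᵛ) ⊠ (z ⊠ zᵛ) :=
    m2a B hg_m
  have hvv : (a ⊠ z) ⊠ (a ⊠ z)ᵛ = (a ⊠ aᵛ) ⊠ (z ⊠ zᵛ) := by
    rw [iv_op (mulAx B)]
    calc (a ⊠ z) ⊠ (zᵛ ⊠ aᵛ) = a ⊠ ((z ⊠ zᵛ) ⊠ aᵛ) := by simp only [B.mul_assoc]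
      _ = a ⊠ (aᵛ ⊠ (z ⊠ zᵛ)) := by rw [central B hez aᵛ]
      _ = (a ⊠ aᵛ) ⊠ (z ⊠ zᵛ) := (B.mul_assoc _ _ _).symm
  have hre : ((b ⊠ bᵛ) ⊠ (z ⊠ zᵛ)) ⊠ ((a ⊠ aᵛ) ⊠ (z ⊠ zᵛ))
      = ((a ⊠ aᵛ) ⊠ (b ⊠ bᵛ)) ⊠ (z ⊠ zᵛ) := by
    calc ((b ⊠ bᵛ) ⊠ (z ⊠ zᵛ)) ⊠ ((a ⊠ aᵛ) ⊠ (z ⊠ zᵛ))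
        = (b ⊠ bᵛ) ⊠ (((z ⊠ zᵛ) ⊠ (a ⊠ aᵛ)) ⊠ (z ⊠ zᵛ)) := by simp only [B.mul_assoc]
      _ = (b ⊠ bᵛ) ⊠ (((a ⊠ aᵛ) ⊠ (z ⊠ zᵛ)) ⊠ (z ⊠ zᵛ)) := by
          rw [idem_comm (mulAx B) hez hea]
      _ = (b ⊠ bᵛ) ⊠ ((a ⊠ aᵛ) ⊠ ((z ⊠ zᵛ) ⊠ (z ⊠ zᵛ))) := by simp only [B.mul_assoc]
      _ = (b ⊠ bᵛ) ⊠ ((a ⊠ aᵛ) ⊠ (z ⊠ zᵛ)) := by rw [hez]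
      _ = ((b ⊠ bᵛ) ⊠ (a ⊠ aᵛ)) ⊠ (z ⊠ zᵛ) := (B.mul_assoc _ _ _).symm
      _ = ((a ⊠ aᵛ) ⊠ (b ⊠ bᵛ)) ⊠ (z ⊠ zᵛ) := by rw [idem_comm (mulAx B) heb hea]
  have hI : ((a ⊠ aᵛ) ⊠ (b ⊠ bᵛ)) ⊠ (z ⊠ zᵛ) = ((a ⊠ aᵛ) ⊹ (b ⊠ bᵛ)) ⊹ (z ⊠ zᵛ) := by
    rw [← eprod B hea heb, ← eprod B (idem_op (mulAx B) hea heb) hez]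
  have hσ : ∸(a ⊠ z) ⊹ ((a ⊠ b) ⊠ z)
      = ∸(a ⊠ z) ⊹ ((a ⊠ z) ⊠ (zᵛ ⊠ (b ⊠ z))) := by rw [hA]
  rw [hσ]
  calc (∸(a ⊠ z) ⊹ ((a ⊠ z) ⊠ (zᵛ ⊠ (b ⊠ z))))
        ⊠ ((∸(a ⊠ z) ⊹ ((a ⊠ z) ⊠ (zᵛ ⊠ (b ⊠ z))))ᵛ)
      = ∸(∸(a ⊠ z) ⊹ ((a ⊠ z) ⊠ (zᵛ ⊠ (b ⊠ z))))
          ⊹ (∸(a ⊠ z) ⊹ ((a ⊠ z) ⊠ (zᵛ ⊠ (b ⊠ z)))) := B.weak _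
    _ = (∸(a ⊠ z) ⊹ ((a ⊠ z) ⊠ ∸(zᵛ ⊠ (b ⊠ z))))
          ⊹ (∸(a ⊠ z) ⊹ ((a ⊠ z) ⊠ (zᵛ ⊠ (b ⊠ z)))) := by rw [lam_neg B]
    _ = ∸(a ⊠ z) ⊹ ((a ⊠ z) ⊠ (∸(zᵛ ⊠ (b ⊠ z)) ⊹ (zᵛ ⊠ (b ⊠ z)))) :=
        hlam B (a ⊠ z) (∸(zᵛ ⊠ (b ⊠ z))) (zᵛ ⊠ (b ⊠ z))
    _ = ∸(a ⊠ z) ⊹ ((a ⊠ z) ⊠ ((zᵛ ⊠ (b ⊠ z)) ⊠ (zᵛ ⊠ (b ⊠ z))ᵛ)) := by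
        rw [B.weak (zᵛ ⊠ (b ⊠ z))]
    _ = ∸(a ⊠ z) ⊹ ((a ⊠ z) ⊠ ((b ⊠ bᵛ) ⊠ (z ⊠ zᵛ))) := by rw [hF]
    _ = ∸((a ⊠ z) ⊠ ((b ⊠ bᵛ) ⊠ (z ⊠ zᵛ)))
          ⊹ ((a ⊠ z) ⊠ ((b ⊠ bᵛ) ⊠ (z ⊠ zᵛ))) := keystar B hg_a (a ⊠ z)
    _ = ((a ⊠ z) ⊠ ((b ⊠ bᵛ) ⊠ (z ⊠ zᵛ)))
          ⊠ (((a ⊠ z) ⊠ ((b ⊠ bᵛ) ⊠ (z ⊠ zᵛ)))ᵛ) := (B.weak _).symm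
    _ = ((b ⊠ bᵛ) ⊠ (z ⊠ zᵛ)) ⊠ ((a ⊠ z) ⊠ (a ⊠ z)ᵛ) := Hstep B hg_m (a ⊠ z)
    _ = ((b ⊠ bᵛ) ⊠ (z ⊠ zᵛ)) ⊠ ((a ⊠ aᵛ) ⊠ (z ⊠ zᵛ)) := by rw [hvv]
    _ = ((a ⊠ aᵛ) ⊠ (b ⊠ bᵛ)) ⊠ (z ⊠ zᵛ) := hre
    _ = ((a ⊠ aᵛ) ⊹ (b ⊠ bᵛ)) ⊹ (z ⊠ zᵛ) := hI

end Final
end DWB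

/-- For `z ∈ D_r(S)`, `σ_a^z(b) ∘ (σ_a^z(b))⁻ = a∘a⁻ + b∘b⁻ + z∘z⁻`. -/
theorem statement4 {S : Type*} (B : DualWeakBrace S) (z : S) (hz : z ∈ B.Dr) :
    ∀ a b : S, B.mul (B.sigma z a b) (B.inv (B.sigma z a b)) =
      B.add (B.add (B.mul a (B.inv a)) (B.mul b (B.inv b))) (B.mul z (B.inv z)) := by
  intro a b
  exact DWB.main B a b z
end

section
/- Let (B, +, ∘) be a skew brace and z ∈ B with (a+b)∘z = a∘z - z + b∘z for all a, b ∈ B. Then the map r_z(a,b) = (-a∘z + a∘b∘z, (-a∘z + a∘b∘z)⁻ ∘ a ∘ b) is a bijective set-theoretic solution of the Yang-Baxter equation on B, with inverse given by the map (a,b) ↦ (a∘b - a∘z⁻ + z⁻, (a∘b - a∘z⁻ + z⁻)⁻ ∘ a ∘ b). -/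
/-- The braid/Yang-Baxter condition for a map `r : X × X → X × X`. -/
def IsYBE {X : Type*} (r : X × X → X × X) : Prop :=
  (fun p : X × X × X => ((r (p.1, p.2.1)).1, (r (p.1, p.2.1)).2, p.2.2)) ∘
      (fun p : X × X × X => (p.1, r (p.2.1, p.2.2))) ∘
      (fun p : X × X × X => ((r (p.1, p.2.1)).1, (r (p.1, p.2.1)).2, p.2.2)) =
    (fun p : X × X × X => (p.1, r (p.2.1, p.2.2))) ∘
      (fun p : X × X × X => ((r (p.1, p.2.1)).1, (r (p.1, p.2.1)).2, p.2.2)) ∘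
      (fun p : X × X × X => (p.1, r (p.2.1, p.2.2)))

/-- A skew (left) brace: two group structures with common identity `zero`, with
`a ∘ (b + c) = a ∘ b - a + a ∘ c`. -/
structure SkewBrace (B : Type*) where
  add : B → B → B
  zero : B
  neg : B → B
  mul : B → B → B
  inv : B → B
  add_assoc : ∀ a b c, add (add a b) c = add a (add b c)
  zero_add : ∀ a, add zero a = a
  add_zero : ∀ a, add a zero = a
  neg_add : ∀ a, add (neg a) a = zero
  add_neg : ∀ a, add a (neg a) = zero
  mul_assoc : ∀ a b c, mul (mul a b) c = mul a (mul b c)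
  zero_mul : ∀ a, mul zero a = a
  mul_zero : ∀ a, mul a zero = a
  inv_mul : ∀ a, mul (inv a) a = zero
  mul_inv : ∀ a, mul a (inv a) = zero
  dist : ∀ a b c, mul a (add b c) = add (add (mul a b) (neg a)) (mul a c)

/-- The right distributor `D_r(B)`. -/
def SkewBrace.Dr {B : Type*} (Br : SkewBrace B) : Set B :=
  {z | ∀ a b, Br.mul (Br.add a b) z = Br.add (Br.add (Br.mul a z) (Br.neg z)) (Br.mul b z)}

/-- `σ_a^z(b) = -a∘z + a∘b∘z`. -/
def SkewBrace.sigma {B : Type*} (Br : SkewBrace B) (z a b : B) : B :=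
  Br.add (Br.neg (Br.mul a z)) (Br.mul (Br.mul a b) z)

/-- `τ_b^z(a) = (σ_a^z(b))⁻ ∘ a ∘ b`. -/
def SkewBrace.tau {B : Type*} (Br : SkewBrace B) (z b a : B) : B :=
  Br.mul (Br.mul (Br.inv (Br.sigma z a b)) a) b

/-- The deformed map `r_z`. -/
def SkewBrace.rz {B : Type*} (Br : SkewBrace B) (z : B) : B × B → B × B :=
  fun p => (Br.sigma z p.1 p.2, Br.tau z p.2 p.1)

/-- The map `ř_w(a,b) = (a∘b - a∘w + w, (a∘b - a∘w + w)⁻ ∘ a ∘ b)`. -/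
def SkewBrace.rcheck {B : Type*} (Br : SkewBrace B) (w : B) : B × B → B × B :=
  fun p =>
    (Br.add (Br.add (Br.mul p.1 p.2) (Br.neg (Br.mul p.1 w))) w,
     Br.mul (Br.mul (Br.inv (Br.add (Br.add (Br.mul p.1 p.2) (Br.neg (Br.mul p.1 w))) w)) p.1) p.2)

section SB6Helpers

variable {B : Type*} [AddGroup B] [Group B]

def sb6sig (z a b : B) : B := -(a * z) + a * b * z

def sb6tau (z b a : B) : B := (sb6sig z a b)⁻¹ * a * b

def sb6rz (z : B) : B × B → B × B := fun p => (sb6sig z p.1 p.2, sb6tau z p.2 p.1)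

def sb6rc (w : B) : B × B → B × B := fun p =>
  (p.1 * p.2 + -(p.1 * w) + w, (p.1 * p.2 + -(p.1 * w) + w)⁻¹ * p.1 * p.2)

lemma sb6_mul_zero (h1 : (1 : B) = 0) (a : B) : a * (0 : B) = a := by rw [← h1, mul_one]

lemma sb6_zero_mul (h1 : (1 : B) = 0) (a : B) : (0 : B) * a = a := by rw [← h1, one_mul]

lemma sb6_Lneg (h1 : (1 : B) = 0)
    (hd : ∀ a b c : B, a * (b + c) = a * b + -a + a * c) (a x : B) :
    a * (-x) = a + -(a * x) + a := by
  have h := hd a x (-x)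
  rw [add_neg_cancel, sb6_mul_zero h1] at h
  calc a * (-x) = -(a * x + -a) + (a * x + -a + a * (-x)) := (neg_add_cancel_left _ _).symm
    _ = -(a * x + -a) + a := by rw [← h]
    _ = a + -(a * x) + a := by rw [neg_add_rev, neg_neg]

lemma sb6_negmul (h1 : (1 : B) = 0) {y : B}
    (hy : ∀ a b : B, (a + b) * y = a * y + -y + b * y) (x : B) :
    (-x) * y = y + -(x * y) + y := by
  have h := hy x (-x)
  rw [add_neg_cancel, sb6_zero_mul h1] at h
  calc (-x) * y = -(x * y + -y) + (x * y + -y + (-x) * y) := (neg_add_cancel_left _ _).symm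
    _ = -(x * y + -y) + y := by rw [← h]
    _ = y + -(x * y) + y := by rw [neg_add_rev, neg_neg]

lemma sb6_hw (h1 : (1 : B) = 0) (z : B)
    (hz : ∀ a b : B, (a + b) * z = a * z + -z + b * z) :
    ∀ a b : B, (a + b) * z⁻¹ = a * z⁻¹ + -z⁻¹ + b * z⁻¹ := by
  intro x y
  apply mul_right_cancel (b := z)
  rw [inv_mul_cancel_right, hz, hz, sb6_negmul h1 hz, inv_mul_cancel_right,
    inv_mul_cancel_right, inv_mul_cancel, h1]
  simp [add_assoc]

lemma sb6_st (z a b : B) : sb6sig z a b * sb6tau z b a = a * b := by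
  simp [sb6tau, mul_assoc]

lemma sb6_A (h1 : (1 : B) = 0)
    (hd : ∀ a b c : B, a * (b + c) = a * b + -a + a * c) (z x y w : B) :
    x * sb6sig z y w = x + sb6sig z (x * y) w := by
  simp only [sb6sig]
  rw [hd, sb6_Lneg h1 hd]
  simp [add_assoc, mul_assoc]

lemma sb6_B (z x m n : B) :
    sb6sig z x m + sb6sig z (x * m) n = sb6sig z x (m * n) := by
  simp [sb6sig, add_assoc, mul_assoc]

lemma sb6_C (h1 : (1 : B) = 0)
    (hd : ∀ a b c : B, a * (b + c) = a * b + -a + a * c)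
    (z : B) (hz : ∀ a b : B, (a + b) * z = a * z + -z + b * z) (x y c : B) :
    sb6sig z x (sb6sig z y c) = -(x * y * z * z) + x * y * c * z * z := by
  simp only [sb6sig]
  simp [hd, sb6_Lneg h1 hd, hz, sb6_negmul h1 hz, add_assoc, mul_assoc]

lemma sb6_E1 (h1 : (1 : B) = 0)
    (hd : ∀ a b c : B, a * (b + c) = a * b + -a + a * c)
    (z : B) (hz : ∀ a b : B, (a + b) * z = a * z + -z + b * z) (a b c : B) :
    sb6sig z (sb6sig z a b) (sb6sig z (sb6tau z b a) c) = sb6sig z a (sb6sig z b c) := by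
  rw [sb6_C h1 hd z hz, sb6_C h1 hd z hz, sb6_st]

lemma sb6_star (h1 : (1 : B) = 0)
    (hd : ∀ a b c : B, a * (b + c) = a * b + -a + a * c) (z a b c : B) :
    sb6sig z a (sb6sig z b c) * sb6sig z (sb6tau z (sb6sig z b c) a) (sb6tau z c b)
      = sb6sig z a b * sb6sig z (sb6tau z b a) c := by
  rw [sb6_A h1 hd z, sb6_A h1 hd z, sb6_st, sb6_st, sb6_B, sb6_B, sb6_st]

end SB6Helpers

section SB6Main

variable {B : Type*} [AddGroup B] [Group B]

lemma sb6_E2 (h1 : (1 : B) = 0)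
    (hd : ∀ a b c : B, a * (b + c) = a * b + -a + a * c)
    (z : B) (hz : ∀ a b : B, (a + b) * z = a * z + -z + b * z) (a b c : B) :
    sb6tau z (sb6sig z (sb6tau z b a) c) (sb6sig z a b)
      = sb6sig z (sb6tau z (sb6sig z b c) a) (sb6tau z c b) := by
  conv_lhs => rw [sb6tau]
  rw [sb6_E1 h1 hd z hz, mul_assoc, ← sb6_star h1 hd z, inv_mul_cancel_left]

lemma sb6_E3 (h1 : (1 : B) = 0)
    (hd : ∀ a b c : B, a * (b + c) = a * b + -a + a * c)
    (z : B) (hz : ∀ a b : B, (a + b) * z = a * z + -z + b * z) (a b c : B) :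
    sb6tau z c (sb6tau z b a)
      = sb6tau z (sb6tau z c b) (sb6tau z (sb6sig z b c) a) := by
  have hX : sb6sig z (sb6tau z (sb6sig z b c) a) (sb6tau z c b)
      = (sb6sig z a (sb6sig z b c))⁻¹ * (sb6sig z a b * sb6sig z (sb6tau z b a) c) := by
    rw [← sb6_star h1 hd z, inv_mul_cancel_left]
  conv_lhs => rw [sb6tau]
  conv_rhs => rw [sb6tau]
  rw [hX]
  simp only [sb6tau]
  group

lemma sb6_ybe (h1 : (1 : B) = 0)
    (hd : ∀ a b c : B, a * (b + c) = a * b + -a + a * c)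
    (z : B) (hz : ∀ a b : B, (a + b) * z = a * z + -z + b * z) :
    IsYBE (sb6rz z) := by
  funext p
  obtain ⟨a, b, c⟩ := p
  simp only [IsYBE, Function.comp_apply, sb6rz, Prod.mk.injEq]
  exact ⟨sb6_E1 h1 hd z hz a b c, sb6_E2 h1 hd z hz a b c, sb6_E3 h1 hd z hz a b c⟩

lemma sb6_li (h1 : (1 : B) = 0)
    (hd : ∀ a b c : B, a * (b + c) = a * b + -a + a * c)
    (z : B) (hz : ∀ a b : B, (a + b) * z = a * z + -z + b * z) :
    Function.LeftInverse (sb6rc z⁻¹) (sb6rz z) := by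
  rintro ⟨a, b⟩
  simp only [sb6rz, sb6rc]
  have hsw : sb6sig z a b * z⁻¹ = z⁻¹ + -a + a * b := by
    rw [sb6sig, sb6_hw h1 z hz, sb6_negmul h1 (sb6_hw h1 z hz), mul_inv_cancel_right,
      mul_inv_cancel_right]
    simp [add_assoc]
  have hF : sb6sig z a b * sb6tau z b a + -(sb6sig z a b * z⁻¹) + z⁻¹ = a := by
    rw [sb6_st, hsw]
    simp [add_assoc]
  rw [Prod.mk.injEq]
  refine ⟨hF, ?_⟩
  rw [hF, mul_assoc, sb6_st, inv_mul_cancel_left]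

lemma sb6_ri (h1 : (1 : B) = 0)
    (hd : ∀ a b c : B, a * (b + c) = a * b + -a + a * c)
    (z : B) (hz : ∀ a b : B, (a + b) * z = a * z + -z + b * z) :
    Function.RightInverse (sb6rc z⁻¹) (sb6rz z) := by
  rintro ⟨a, b⟩
  simp only [sb6rz, sb6rc]
  set u := a * b + -(a * z⁻¹) + z⁻¹ with hu
  have huv : u * ((u⁻¹ * a) * b) = a * b := by
    rw [← mul_assoc, mul_inv_cancel_left]
  have huz : u * z = a * b * z + -a := by
    rw [hu, hz, hz, sb6_negmul h1 hz, inv_mul_cancel_right, inv_mul_cancel, h1]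
    simp [add_assoc]
  have hsig : sb6sig z u (u⁻¹ * a * b) = a := by
    rw [sb6sig, huz, huv]
    simp [add_assoc]
  rw [Prod.mk.injEq]
  refine ⟨hsig, ?_⟩
  rw [sb6tau, hsig, mul_assoc, huv, inv_mul_cancel_left]

end SB6Main

/-- For a skew brace `B` and `z` with `(a+b)∘z = a∘z - z + b∘z`, the deformed map `r_z`
is a bijective solution of the Yang-Baxter equation, with inverse
`(a,b) ↦ (a∘b - a∘z⁻ + z⁻, (a∘b - a∘z⁻ + z⁻)⁻ ∘ a ∘ b)`. -/
theorem statement6 {B : Type*} (Br : SkewBrace B) (z : B)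
    (hz : ∀ a b : B, Br.mul (Br.add a b) z =
      Br.add (Br.add (Br.mul a z) (Br.neg z)) (Br.mul b z)) :
    IsYBE (Br.rz z) ∧ Function.Bijective (Br.rz z) ∧
      Function.LeftInverse (Br.rcheck (Br.inv z)) (Br.rz z) ∧
      Function.RightInverse (Br.rcheck (Br.inv z)) (Br.rz z) := by
  letI : Add B := ⟨Br.add⟩
  letI : Zero B := ⟨Br.zero⟩
  letI : Neg B := ⟨Br.neg⟩
  letI : Mul B := ⟨Br.mul⟩
  letI : One B := ⟨Br.zero⟩
  letI : Inv B := ⟨Br.inv⟩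
  letI : AddGroup B := AddGroup.ofLeftAxioms Br.add_assoc Br.zero_add Br.neg_add
  letI : Group B := Group.ofLeftAxioms Br.mul_assoc Br.zero_mul Br.inv_mul
  have h1 : (1 : B) = 0 := rfl
  have hd : ∀ a b c : B, a * (b + c) = a * b + -a + a * c := Br.dist
  have hz' : ∀ a b : B, (a + b) * z = a * z + -z + b * z := hz
  have hrz : Br.rz z = sb6rz z := rfl
  have hrc : Br.rcheck (Br.inv z) = sb6rc z⁻¹ := rfl
  rw [hrz, hrc]
  exact ⟨sb6_ybe h1 hd z hz',
    ⟨(sb6_li h1 hd z hz').injective, (sb6_ri h1 hd z hz').surjective⟩,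
    sb6_li h1 hd z hz', sb6_ri h1 hd z hz'⟩
end
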